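/- arXiv:2412.11055 — 8 statements merged into one kernel-verified Lean document; each statement's English description precedes it below -/
import Mathlib

section
/- Let τ be an uncountable cardinal. A (Hausdorff) topological group G is pseudo-τ-fine if and only if every closed subgroup M of G with ψ(G/M) ≤ τ contains a closed subgroup N of G such that ψ(G/N) ≤ ω. -/
open Cardinal Topology Pointwise

universe u

/-- The pseudocharacter of a topological space at a point: the least cardinality of a family of
open neighbourhoods of the point whose intersection is the singleton of that point. -/
noncomputable def psiAt (X : Type u) [TopologicalSpace X] (x : X) : Cardinal.{u} :=
  sInf {c | ∃ S : Set (Set X), (∀ U ∈ S, IsOpen U ∧ x ∈ U) ∧ ⋂₀ S = {x} ∧ #S = c}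

/-- The pseudocharacter of a topological group. -/
noncomputable def psi (G : Type u) [TopologicalSpace G] [Group G] : Cardinal.{u} :=
  psiAt G 1

/-- A topological group `G` is pseudo-`τ`-fine if for every family of at most `τ` many
neighbourhoods of the identity there is a countable family of identity neighbourhoods whose
intersection is contained in the intersection of the given family. -/
def IsPseudoTauFine (τ : Cardinal.{u}) (G : Type u) [TopologicalSpace G] [Group G] : Prop :=
  ∀ (ι : Type u) (U : ι → Set G), #ι ≤ τ → (∀ i, U i ∈ 𝓝 (1 : G)) →
    ∃ V : ℕ → Set G, (∀ n, V n ∈ 𝓝 (1 : G)) ∧ (⋂ n, V n) ⊆ ⋂ i, U i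

/-- A topological space is pseudocompact if every continuous real-valued function on it
is bounded. -/
def Pseudocompact (X : Type u) [TopologicalSpace X] : Prop :=
  ∀ f : X → ℝ, Continuous f → ∃ C : ℝ, ∀ x, |f x| ≤ C

/-- A topological group is precompact (totally bounded, i.e. its Weil completion is compact)
if every identity neighbourhood has finitely many translates covering the group. -/
def PrecompactGroup (G : Type u) [TopologicalSpace G] [Group G] : Prop :=
  ∀ U ∈ 𝓝 (1 : G), ∃ F : Finset G, (Set.univ : Set G) ⊆ ⋃ g ∈ F, g • U

/-- The pseudo-fineness index: least cardinal `τ` such that `G` is not pseudo-`τ`-fine. -/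
noncomputable def pfi (G : Type u) [TopologicalSpace G] [Group G] : Cardinal.{u} :=
  sInf {τ | ¬ IsPseudoTauFine τ G}

/-- The weight of a topological space: least cardinality of a base. -/
noncomputable def wt (X : Type u) [TopologicalSpace X] : Cardinal.{u} :=
  sInf {c | ∃ B : Set (Set X), TopologicalSpace.IsTopologicalBasis B ∧ #B = c}

/-- The character of a topological space at a point: least cardinality of a neighbourhood base. -/
noncomputable def chiAt (X : Type u) [TopologicalSpace X] (x : X) : Cardinal.{u} :=
  sInf {c | ∃ S : Set (Set X), (∀ U ∈ S, U ∈ 𝓝 x) ∧ (∀ V ∈ 𝓝 x, ∃ U ∈ S, U ⊆ V) ∧ #S = c}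

/-- The density of a topological space: least cardinality of a dense subset. -/
noncomputable def dens (X : Type u) [TopologicalSpace X] : Cardinal.{u} :=
  sInf {c | ∃ s : Set X, Dense s ∧ #s = c}

/-- A topological group is (isomorphic to) a finite-dimensional real Lie group. -/
def IsLieGroupTop (L : Type u) [TopologicalSpace L] [Group L] : Prop :=
  ∃ (n : ℕ) (_cs : ChartedSpace (EuclideanSpace ℝ (Fin n)) L),
    LieGroup (modelWithCornersSelf ℝ (EuclideanSpace ℝ (Fin n))) (⊤ : ℕ∞) L

/-- The set of co-Lie subgroups of a topological group: closed normal subgroups with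
Lie quotient. -/
def coLieSubgroups (G : Type u) [TopologicalSpace G] [Group G] : Set (Subgroup G) :=
  {N | IsClosed (N : Set G) ∧ ∃ _h : N.Normal, IsLieGroupTop (G ⧸ N)}

/-- The co-Lie character: the number of co-Lie subgroups. -/
noncomputable def cL (G : Type u) [TopologicalSpace G] [Group G] : Cardinal.{u} :=
  #(coLieSubgroups G)

/-!
For a closed subgroup `N`, `ψ(G/N) ≤ κ` says exactly that `N = ⋂ᵢ Oᵢ N` for at most `κ`
identity neighbourhoods `Oᵢ`. Below any countably many identity neighbourhoods there is a closed
subgroup of countable pseudocharacter: choose closed neighbourhoods `Wₙ ⊆ Vₙ` with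
`Wₙ₊₁ Wₙ₊₁⁻¹ ⊆ Wₙ` and take `N = ⋂ₙ Wₙ`.

If `G` is pseudo-`τ`-fine, apply this to the countable family refining the `τ` neighbourhoods
describing `M`. Conversely, given `τ` neighbourhoods `Uᵢ`, choose such subgroups `Nᵢ ⊆ Uᵢ`; then
`M = ⋂ᵢ Nᵢ` has `ψ(G/M) ≤ τ · ℵ₀ = τ`, and the countably many neighbourhoods describing the
subgroup found inside `M` lie below every `Uᵢ`.
-/

open Set

theorem Filter.exists_nat_iInter_eq_of_countable {α ι : Type*} [Countable ι] {f : Filter α}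
    {s : ι → Set α} (hs : ∀ i, s i ∈ f) :
    ∃ t : ℕ → Set α, (∀ n, t n ∈ f) ∧ ⋂ n, t n = ⋂ i, s i := by
  obtain ⟨e, he⟩ := exists_surjective_nat (Option ι)
  refine ⟨fun n => (e n).elim univ s, fun n => ?_, ?_⟩
  · show (e n).elim Set.univ s ∈ f
    rcases e n with _ | i
    exacts [Filter.univ_mem, hs i]
  · rw [he.iInter_comp (fun o => o.elim univ s), iInter_option]
    simp

theorem exists_psiAt_eq (X : Type u) [TopologicalSpace X] [T1Space X] (x : X) :
    ∃ S : Set (Set X), (∀ U ∈ S, IsOpen U ∧ x ∈ U) ∧ ⋂₀ S = {x} ∧ #S = psiAt X x := by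
  have hx : ⋂₀ {U : Set X | IsOpen U ∧ x ∈ U} = {x} := by
    refine Subset.antisymm (fun y hy => ?_) fun y (hy : y = x) U hU => hy ▸ hU.2
    by_contra hyx
    exact hy {y}ᶜ ⟨isOpen_compl_singleton, Ne.symm hyx⟩ rfl
  exact csInf_mem
    (s := {c | ∃ S : Set (Set X), (∀ U ∈ S, IsOpen U ∧ x ∈ U) ∧ ⋂₀ S = {x} ∧ #S = c})
    ⟨_, _, fun U hU => hU, hx, rfl⟩

theorem psiAt_le_mk_of_sInter_eq {X : Type u} [TopologicalSpace X] {x : X} {S : Set (Set X)}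
    (hS : ∀ U ∈ S, IsOpen U ∧ x ∈ U) (hSx : ⋂₀ S = {x}) : psiAt X x ≤ #S :=
  csInf_le' ⟨S, hS, hSx, rfl⟩

section

variable {G : Type u} [TopologicalSpace G] [Group G] [IsTopologicalGroup G]

theorem psiAt_quotient_le_of_iInter_mul_subset {N : Subgroup G} {ι : Type u} {O : ι → Set G}
    (hO : ∀ i, O i ∈ 𝓝 1) (hON : ⋂ i, O i * (N : Set G) ⊆ N) :
    psiAt (G ⧸ N) (QuotientGroup.mk 1) ≤ #ι := by
  have h1 : ∀ i, (1 : G) ∈ interior (O i) := fun i => mem_interior_iff_mem_nhds.2 (hO i)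
  refine (psiAt_le_mk_of_sInter_eq (S := range fun i => QuotientGroup.mk '' interior (O i))
    ?_ ?_).trans mk_range_le
  · rintro _ ⟨i, rfl⟩
    exact ⟨QuotientGroup.isOpenMap_coe _ isOpen_interior, 1, h1 i, rfl⟩
  refine Subset.antisymm (fun x hx => ?_) ?_
  · obtain ⟨g, rfl⟩ := QuotientGroup.mk_surjective x
    have hg : g ∈ ⋂ i, O i * (N : Set G) := mem_iInter.2 fun i => by
      have := hx _ ⟨i, rfl⟩
      rw [← mem_preimage, QuotientGroup.preimage_image_mk_eq_mul] at this
      exact mul_subset_mul_right interior_subset this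
    exact (QuotientGroup.preimage_mk_one N).superset (hON hg)
  · rintro _ rfl _ ⟨i, rfl⟩
    exact ⟨1, h1 i, rfl⟩

theorem exists_iInter_mul_subset_of_psiAt_quotient_le {N : Subgroup G}
    (hN : IsClosed (N : Set G)) {c : Cardinal.{u}} (h : psiAt (G ⧸ N) (QuotientGroup.mk 1) ≤ c) :
    ∃ (ι : Type u) (O : ι → Set G), #ι ≤ c ∧ (∀ i, O i ∈ 𝓝 1) ∧ ⋂ i, O i * (N : Set G) ⊆ N := by
  have := QuotientGroup.t1Space_iff.2 hN
  obtain ⟨S, hSo, hS, hSc⟩ := exists_psiAt_eq (G ⧸ N) (QuotientGroup.mk 1)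
  refine ⟨S, fun s => QuotientGroup.mk ⁻¹' (s : Set (G ⧸ N)), hSc.le.trans h, fun s => ?_,
    fun g hg => ?_⟩
  · exact QuotientGroup.continuous_mk.continuousAt.preimage_mem_nhds
      ((hSo s s.2).1.mem_nhds (hSo s s.2).2)
  · have hgS : (g : G ⧸ N) ∈ ⋂₀ S := fun s hs => by
      obtain ⟨o, ho, m, hm, rfl⟩ := mem_iInter.1 hg ⟨s, hs⟩
      rwa [QuotientGroup.mk_mul_of_mem o hm]
    rw [hS] at hgS
    exact (QuotientGroup.preimage_mk_one N).subset hgS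

theorem exists_isClosed_nhds_one_mul_inv_subset {U : Set G} (hU : U ∈ 𝓝 1) :
    ∃ W ∈ 𝓝 (1 : G), IsClosed W ∧ W ⊆ U ∧ ∀ v ∈ W, ∀ w ∈ W, v * w⁻¹ ∈ U := by
  obtain ⟨V, hV, hVU⟩ := exists_nhds_split_inv hU
  obtain ⟨W, hW, hWc, hWV⟩ := exists_mem_nhds_isClosed_subset hV
  have hUW : ∀ v ∈ W, ∀ w ∈ W, v * w⁻¹ ∈ U := fun v hv w hw =>
    div_eq_mul_inv v w ▸ hVU v (hWV hv) w (hWV hw)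
  refine ⟨W, hW, hWc, fun w hw => ?_, hUW⟩
  simpa using hUW w hw 1 (mem_of_mem_nhds hW)

theorem exists_seq_isClosed_nhds_one_mul_inv_subset (V : ℕ → Set G) (hV : ∀ n, V n ∈ 𝓝 1) :
    ∃ W : ℕ → Set G, (∀ n, W n ∈ 𝓝 1) ∧ (∀ n, IsClosed (W n)) ∧ (∀ n, W n ⊆ V n) ∧
      ∀ n, ∀ v ∈ W (n + 1), ∀ w ∈ W (n + 1), v * w⁻¹ ∈ W n := by
  have step (U : {U : Set G // U ∈ 𝓝 1}) : ∃ W : {W : Set G // W ∈ 𝓝 1},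
      IsClosed W.1 ∧ W.1 ⊆ U.1 ∧ ∀ v ∈ W.1, ∀ w ∈ W.1, v * w⁻¹ ∈ U.1 := by
    obtain ⟨W, hW, hWU⟩ := exists_isClosed_nhds_one_mul_inv_subset U.2
    exact ⟨⟨W, hW⟩, hWU⟩
  choose f hf using step
  let W : ℕ → {U : Set G // U ∈ 𝓝 1} := fun n =>
    Nat.rec (f ⟨V 0, hV 0⟩) (fun n Wn => f ⟨V (n + 1) ∩ Wn.1, Filter.inter_mem (hV _) Wn.2⟩) n
  refine ⟨fun n => (W n).1, fun n => (W n).2, fun n => ?_, fun n => ?_,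
    fun n v hv w hw => ((hf _).2.2 v hv w hw).2⟩
  · cases n <;> exact (hf _).1
  · cases n
    · exact (hf _).2.1
    · exact fun x hx => ((hf _).2.1 hx).1

theorem exists_isClosed_subgroup_subset_iInter_psiAt_le_aleph0 (V : ℕ → Set G)
    (hV : ∀ n, V n ∈ 𝓝 1) :
    ∃ N : Subgroup G, IsClosed (N : Set G) ∧ (N : Set G) ⊆ ⋂ n, V n ∧
      psiAt (G ⧸ N) (QuotientGroup.mk 1) ≤ ℵ₀ := by
  obtain ⟨W, hW, hWc, hWV, hWW⟩ := exists_seq_isClosed_nhds_one_mul_inv_subset V hV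
  let N : Subgroup G :=
    Subgroup.ofDiv (⋂ n, W n) ⟨1, mem_iInter.2 fun n => mem_of_mem_nhds (hW n)⟩ fun v hv w hw =>
      mem_iInter.2 fun n => hWW n v (mem_iInter.1 hv _) w (mem_iInter.1 hw _)
  have hNW : ∀ n, (N : Set G) ⊆ W n := iInter_subset W
  refine ⟨N, isClosed_iInter hWc, subset_iInter fun n => (hNW n).trans (hWV n), ?_⟩
  -- `W (n + 1) * N ⊆ W n`, since `N` is symmetric and contained in `W (n + 1)`.
  have hWN : ⋂ k : ULift.{u} ℕ, W k.down * (N : Set G) ⊆ N := fun g hg =>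
    mem_iInter.2 fun n => by
      obtain ⟨v, hv, m, hm, rfl⟩ := mem_iInter.1 hg ⟨n + 1⟩
      simpa using hWW n v hv m⁻¹ (hNW _ (inv_mem hm))
  simpa using psiAt_quotient_le_of_iInter_mul_subset (fun k : ULift.{u} ℕ => hW k.down) hWN

theorem psiAt_quotient_iInf_le {ι : Type u} {N : ι → Subgroup G}
    (hN : ∀ i, IsClosed (N i : Set G)) {c : Cardinal.{u}}
    (h : ∀ i, psiAt (G ⧸ N i) (QuotientGroup.mk 1) ≤ c) :
    psiAt (G ⧸ ⨅ i, N i) (QuotientGroup.mk 1) ≤ #ι * c := by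
  choose κ O hκ hO hON using fun i => exists_iInter_mul_subset_of_psiAt_quotient_le (hN i) (h i)
  have hOM : ⋂ p : Σ i, κ i, O p.1 p.2 * ((⨅ i, N i : Subgroup G) : Set G) ⊆
      ((⨅ i, N i : Subgroup G) : Set G) := by
    intro g hg
    rw [SetLike.mem_coe, Subgroup.mem_iInf]
    exact fun i => hON i <| mem_iInter.2 fun k =>
      mul_subset_mul_left (iInf_le N i) (mem_iInter.1 hg ⟨i, k⟩)
  calc psiAt (G ⧸ ⨅ i, N i) (QuotientGroup.mk 1)
      ≤ #(Σ i, κ i) := psiAt_quotient_le_of_iInter_mul_subset (fun p => hO p.1 p.2) hOM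
    _ = sum fun i => #(κ i) := mk_sigma _
    _ ≤ sum fun _ : ι => c := sum_le_sum _ _ hκ
    _ = #ι * c := sum_const' ι c

theorem exists_seq_nhds_one_iInter_subset_of_psiAt_quotient_le_aleph0 {N : Subgroup G}
    (hN : IsClosed (N : Set G)) (h : psiAt (G ⧸ N) (QuotientGroup.mk 1) ≤ ℵ₀) :
    ∃ V : ℕ → Set G, (∀ n, V n ∈ 𝓝 1) ∧ ⋂ n, V n ⊆ N := by
  obtain ⟨ι, O, hι, hO, hON⟩ := exists_iInter_mul_subset_of_psiAt_quotient_le hN h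
  have := mk_le_aleph0_iff.1 hι
  obtain ⟨V, hV, hVO⟩ := Filter.exists_nat_iInter_eq_of_countable hO
  exact ⟨V, hV, hVO ▸ (iInter_mono fun i => subset_mul_left _ N.one_mem).trans hON⟩

end

theorem statement_0_general (τ : Cardinal.{u}) (hτ : ℵ₀ < τ) (G : Type u) [TopologicalSpace G] [Group G]
    [IsTopologicalGroup G] :
    IsPseudoTauFine τ G ↔
      ∀ M : Subgroup G, IsClosed (M : Set G) →
        psiAt (G ⧸ M) (QuotientGroup.mk 1) ≤ τ →
          ∃ N : Subgroup G, IsClosed (N : Set G) ∧ N ≤ M ∧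
            psiAt (G ⧸ N) (QuotientGroup.mk 1) ≤ ℵ₀ := by
  constructor
  · intro hfine M hM hMτ
    obtain ⟨ι, O, hι, hO, hOM⟩ := exists_iInter_mul_subset_of_psiAt_quotient_le hM hMτ
    obtain ⟨V, hV, hVO⟩ := hfine ι O hι hO
    obtain ⟨N, hN, hNV, hNψ⟩ := exists_isClosed_subgroup_subset_iInter_psiAt_le_aleph0 V hV
    have hOM' : ⋂ i, O i ⊆ M := (iInter_mono fun i => subset_mul_left _ M.one_mem).trans hOM
    exact ⟨N, hN, fun g hg => hOM' (hVO (hNV hg)), hNψ⟩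
  · intro hsub ι U hι hU
    choose N hN hNU hNψ using fun i =>
      exists_isClosed_subgroup_subset_iInter_psiAt_le_aleph0 (fun _ => U i) fun _ => hU i
    have hM : IsClosed ((⨅ i, N i : Subgroup G) : Set G) := by
      rw [Subgroup.coe_iInf]
      exact isClosed_iInter hN
    have hMτ : psiAt (G ⧸ ⨅ i, N i) (QuotientGroup.mk 1) ≤ τ :=
      (psiAt_quotient_iInf_le hN hNψ).trans <| (mul_le_mul' hι hτ.le).trans (mul_eq_self hτ.le).le
    obtain ⟨N', hN', hN'M, hN'ψ⟩ := hsub _ hM hMτ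
    obtain ⟨V, hV, hVN'⟩ := exists_seq_nhds_one_iInter_subset_of_psiAt_quotient_le_aleph0 hN' hN'ψ
    refine ⟨V, hV, subset_iInter fun i => ?_⟩
    have hN'U : (N' : Set G) ⊆ ⋂ _ : ℕ, U i :=
      (SetLike.coe_subset_coe.2 (hN'M.trans (iInf_le N i))).trans (hNU i)
    simpa using hVN'.trans hN'U

theorem statement_0 (τ : Cardinal.{u}) (hτ : ℵ₀ < τ) (G : Type u) [TopologicalSpace G] [Group G]
    [IsTopologicalGroup G] [T2Space G] :
    IsPseudoTauFine τ G ↔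
      ∀ M : Subgroup G, IsClosed (M : Set G) →
        psiAt (G ⧸ M) (QuotientGroup.mk 1) ≤ τ →
          ∃ N : Subgroup G, IsClosed (N : Set G) ∧ N ≤ M ∧
            psiAt (G ⧸ N) (QuotientGroup.mk 1) ≤ ℵ₀ :=
  statement_0_general τ hτ G
end

section
/- Every pseudocompact topological group G with countable pseudocharacter (ψ(G) ≤ ω) is metrizable and compact. -/
open Cardinal Topology Pointwise

universe u

/-! A pseudocompact Tychonoff space admits no locally finite sequence of nonempty open sets `Oₙ`:
otherwise `∑ n • fₙ`, with `fₙ` a bump supported in `Oₙ`, would be continuous and unbounded.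
In a regular space with this property, a decreasing sequence of open neighbourhoods `Wₙ` of `x`
whose closures meet only in `x` is a neighbourhood base at `x`: if no `Wₙ` lies in `A ∈ 𝓝 x`,
remove a closed neighbourhood `B ⊆ A` of `x` from every `Wₙ`; the resulting open sets accumulate
at a point of `⋂ closure Wₙ = {x}`, yet `B` misses all of them. Countable pseudocharacter thus gives
`G` a countable base at `1`, so `G` is metrizable (Birkhoff–Kakutani), and a pseudocompact metric
space is compact because the balls `B(uₙ, 1/(n+1))` accumulate only at cluster points of `u`. -/

open Filter Set

def FeeblyCompact (X : Type*) [TopologicalSpace X] : Prop :=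
  ∀ O : ℕ → Set X, (∀ n, IsOpen (O n)) → (∀ n, (O n).Nonempty) → ¬ LocallyFinite O

section

variable {X : Type u} [TopologicalSpace X]

theorem exists_seq_mem_nhds_iInter_eq_of_psiAt_le_aleph0 [T1Space X] {x : X}
    (h : psiAt X x ≤ ℵ₀) : ∃ U : ℕ → Set X, (∀ n, U n ∈ 𝓝 x) ∧ ⋂ n, U n = {x} := by
  -- `sInf ∅ = 0`, so the infimum is attained only once some admissible family is exhibited.
  have hne :
      {c | ∃ S : Set (Set X), (∀ U ∈ S, IsOpen U ∧ x ∈ U) ∧ ⋂₀ S = {x} ∧ #S = c}.Nonempty := by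
    refine ⟨_, {U | IsOpen U ∧ x ∈ U}, fun _ hU => hU, ?_, rfl⟩
    refine Subset.antisymm (fun y hy => ?_) (fun y hy U hU => hy ▸ hU.2)
    by_contra hyx
    exact hy {y}ᶜ ⟨isOpen_compl_singleton, Ne.symm hyx⟩ rfl
  obtain ⟨S, hSo, hSx, hcard⟩ := csInf_mem hne
  have hSc : S.Countable := by
    rw [← Set.countable_coe_iff, ← mk_le_aleph0_iff, hcard]
    exact h
  -- `univ` is added so that the family is nonempty and can be enumerated.
  obtain ⟨U, hU⟩ := (hSc.insert Set.univ).exists_eq_range (insert_nonempty _ _)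
  refine ⟨U, fun n => ?_, ?_⟩
  · rcases (hU ▸ mem_range_self n : U n ∈ insert Set.univ S) with h | h
    · exact h ▸ univ_mem
    · exact (hSo _ h).1.mem_nhds (hSo _ h).2
  · rw [← sInter_range, ← hU, sInter_insert, hSx, univ_inter]

theorem CompletelyRegularSpace.exists_bump [CompletelyRegularSpace X] {x : X} {O : Set X}
    (hO : IsOpen O) (hx : x ∈ O) :
    ∃ f : X → ℝ, Continuous f ∧ f x = 1 ∧ Function.support f ⊆ O ∧ 0 ≤ f := by
  obtain ⟨f, hfc, hfx, hf1⟩ := completelyRegularSpace_iff_isOpen.1 ‹_› x O hO hx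
  refine ⟨fun y => 1 - f y, continuous_const.sub (continuous_subtype_val.comp hfc),
    by simp [hfx], fun y hy => ?_, fun y => sub_nonneg.2 (f y).2.2⟩
  by_contra hyO
  exact hy (by simp [hf1 hyO])

theorem Pseudocompact.feeblyCompact [CompletelyRegularSpace X] (hX : Pseudocompact X) :
    FeeblyCompact X := by
  intro O hO hne hlf
  choose x hx using hne
  choose f hfc hfx hfO hf0 using fun n : ℕ => CompletelyRegularSpace.exists_bump (hO n) (hx n)
  have hsupp : ∀ n : ℕ, Function.support (fun y => (n : ℝ) * f n y) ⊆ O n := fun n =>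
    (Function.support_mul_subset_right _ _).trans (hfO n)
  have hg : Continuous fun y => ∑ᶠ n : ℕ, (n : ℝ) * f n y :=
    continuous_finsum (fun n => continuous_const.mul (hfc n)) (hlf.subset hsupp)
  obtain ⟨C, hC⟩ := hX _ hg
  obtain ⟨N, hN⟩ := exists_nat_gt C
  have hgN : (N : ℝ) ≤ ∑ᶠ n : ℕ, (n : ℝ) * f n (x N) :=
    calc (N : ℝ) = N * f N (x N) := by rw [hfx, mul_one]
      _ ≤ ∑ᶠ n : ℕ, (n : ℝ) * f n (x N) :=
        single_le_finsum N ((hlf.point_finite (x N)).subset fun n hn => hsupp n hn)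
          fun n : ℕ => mul_nonneg n.cast_nonneg (hf0 n _)
  linarith [le_abs_self (∑ᶠ n : ℕ, (n : ℝ) * f n (x N)), hC (x N)]

theorem FeeblyCompact.exists_frequently_nonempty_inter (hX : FeeblyCompact X) {O : ℕ → Set X}
    (hO : ∀ n, IsOpen (O n)) (hne : ∀ n, (O n).Nonempty) :
    ∃ p, ∀ W ∈ 𝓝 p, ∃ᶠ n in atTop, (O n ∩ W).Nonempty := by
  have := hX O hO hne
  simp only [LocallyFinite, not_forall, not_exists, not_and] at this
  obtain ⟨p, hp⟩ := this
  exact ⟨p, fun W hW => Nat.frequently_atTop_iff_infinite.2 (hp W hW)⟩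

theorem FeeblyCompact.hasAntitoneBasis_nhds [RegularSpace X] (hX : FeeblyCompact X) {x : X}
    {W : ℕ → Set X} (hWo : ∀ n, IsOpen (W n)) (hWx : ∀ n, x ∈ W n) (hW : Antitone W)
    (hcl : ⋂ n, closure (W n) ⊆ {x}) : (𝓝 x).HasAntitoneBasis W := by
  refine ⟨⟨fun A => ⟨fun hA => ?_, fun ⟨n, _, hn⟩ => mem_of_superset
    ((hWo n).mem_nhds (hWx n)) hn⟩⟩, hW⟩
  by_contra! hno
  obtain ⟨B, hB, hBc, hBA⟩ := exists_mem_nhds_isClosed_subset hA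
  obtain ⟨p, hp⟩ := hX.exists_frequently_nonempty_inter (O := fun n => W n \ B)
    (fun n => (hWo n).sdiff hBc) fun n => by
      obtain ⟨y, hyW, hyA⟩ := not_subset.1 (hno n trivial)
      exact ⟨y, hyW, fun hyB => hyA (hBA hyB)⟩
  have hpx : p = x := hcl <| mem_iInter.2 fun m => mem_closure_iff_nhds.2 fun t ht => by
    obtain ⟨n, ⟨z, hzW, hzt⟩, hmn⟩ := ((hp t ht).and_eventually (eventually_ge_atTop m)).exists
    exact ⟨z, hzt, hW hmn hzW.1⟩
  subst hpx
  obtain ⟨n, z, ⟨-, hzB⟩, hzB'⟩ := (hp B hB).exists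
  exact hzB hzB'

theorem exists_antitone_isOpen_closure_subset [RegularSpace X] {x : X} {U : ℕ → Set X}
    (hU : ∀ n, U n ∈ 𝓝 x) : ∃ W : ℕ → Set X, (∀ n, IsOpen (W n)) ∧ (∀ n, x ∈ W n) ∧
      Antitone W ∧ ∀ n, closure (W n) ⊆ U n := by
  choose C hC hCc hCU using fun n => exists_mem_nhds_isClosed_subset (hU n)
  refine ⟨fun n => interior (⋂ k ∈ Iic n, C k), fun n => isOpen_interior,
    fun n => mem_interior_iff_mem_nhds.2 ((biInter_mem (finite_Iic n)).2 fun k _ => hC k),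
    fun m n hmn => interior_mono (biInter_mono (Iic_subset_Iic.2 hmn) fun _ _ => subset_rfl),
    fun n => ?_⟩
  exact (closure_minimal interior_subset (isClosed_biInter fun k _ => hCc k)).trans
    ((biInter_subset_of_mem self_mem_Iic).trans (hCU n))

theorem FeeblyCompact.isCountablyGenerated_nhds [RegularSpace X] (hX : FeeblyCompact X) {x : X}
    {U : ℕ → Set X} (hU : ∀ n, U n ∈ 𝓝 x) (hUx : ⋂ n, U n = {x}) :
    (𝓝 x).IsCountablyGenerated := by
  obtain ⟨W, hWo, hWx, hW, hWU⟩ := exists_antitone_isOpen_closure_subset hU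
  exact (hX.hasAntitoneBasis_nhds hWo hWx hW
    ((iInter_mono hWU).trans hUx.subset)).isCountablyGenerated

theorem FeeblyCompact.compactSpace [TopologicalSpace.PseudoMetrizableSpace X]
    (hX : FeeblyCompact X) : CompactSpace X := by
  let := TopologicalSpace.pseudoMetrizableSpacePseudoMetric X
  refine compactSpace_iff_seqCompactSpace.2 ⟨fun u _ => ?_⟩
  obtain ⟨p, hp⟩ :=
    hX.exists_frequently_nonempty_inter (O := fun n => Metric.ball (u n) (1 / (n + 1)))
    (fun _ => Metric.isOpen_ball) fun n => ⟨u n, Metric.mem_ball_self Nat.one_div_pos_of_nat⟩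
  have hclu : MapClusterPt p atTop u := by
    refine Metric.nhds_basis_ball.mapClusterPt_iff_frequently.2 fun ε hε => ?_
    have hsmall : ∀ᶠ n : ℕ in atTop, 1 / ((n : ℝ) + 1) < ε / 2 :=
      tendsto_one_div_add_atTop_nhds_zero_nat.eventually (gt_mem_nhds (half_pos hε))
    refine ((hp _ (Metric.ball_mem_nhds p (half_pos hε))).and_eventually hsmall).mono ?_
    rintro n ⟨⟨z, hzu, hzp⟩, hn⟩
    rw [Metric.mem_ball] at hzu hzp ⊢
    calc dist (u n) p ≤ dist z (u n) + dist z p := dist_triangle_left _ _ _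
      _ < ε := by linarith
  obtain ⟨φ, hφ, hlim⟩ := hclu.tendsto_subseq
  exact ⟨p, mem_univ p, φ, hφ, hlim⟩

end

section

variable (G : Type*) [TopologicalSpace G] [Group G] [IsTopologicalGroup G]

instance IsTopologicalGroup.completelyRegularSpace : CompletelyRegularSpace G :=
  letI := IsTopologicalGroup.rightUniformSpace G
  inferInstance

theorem IsTopologicalGroup.metrizableSpace [T0Space G] [(𝓝 (1 : G)).IsCountablyGenerated] :
    TopologicalSpace.MetrizableSpace G :=
  letI := IsTopologicalGroup.rightUniformSpace G
  haveI : (uniformity G).IsCountablyGenerated := by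
    rw [uniformity_eq_comap_nhds_one' G]
    infer_instance
  UniformSpace.metrizableSpace

end

theorem statement_1 (G : Type u) [TopologicalSpace G] [Group G] [IsTopologicalGroup G] [T2Space G]
    (h1 : Pseudocompact G) (h2 : psi G ≤ ℵ₀) :
    TopologicalSpace.MetrizableSpace G ∧ CompactSpace G := by
  have hG : FeeblyCompact G := h1.feeblyCompact
  obtain ⟨U, hU, hUx⟩ := exists_seq_mem_nhds_iInter_eq_of_psiAt_le_aleph0 h2
  have := hG.isCountablyGenerated_nhds hU hUx
  have := IsTopologicalGroup.metrizableSpace G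
  exact ⟨‹_›, hG.compactSpace⟩
end

section
/- Let G be a precompact abelian topological group whose pseudocharacter ψ(G) is uncountable. Then either pfi(G) ≤ 𝔠, or pfi(G) equals the least cardinal τ > 𝔠 such that G admits a quotient group (by a closed subgroup) of pseudocharacter exactly τ. -/
open Cardinal Topology Pointwise

universe u

/-!
If a quotient `G ⧸ N` by a closed subgroup has pseudocharacter `τ > 𝔠`, then `G` is not
pseudo-`τ`-fine: otherwise `N` would contain a countable intersection `⋂ Vₙ` of identity
neighbourhoods, and precompactness codes each coset by a sequence of centres chosen from finite
covers by translates of neighbourhoods `Wₙ` with `Wₙ⁻¹ Wₙ ⊆ Vₙ`; so `|G ⧸ N| ≤ 𝔠`, and since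
`G ⧸ N` is T1 its pseudocharacter is at most `𝔠`.

Conversely, if `pfi G = τ > 𝔠`, take `τ` identity neighbourhoods `Uᵢ` with no countable family
below their intersection and shrink each `Uᵢ` to a closed subgroup `⋂ₙ Wᵢ,ₙ` along a chain
`Wᵢ,ₙ₊₁² ⊆ Wᵢ,ₙ`. The quotient by the intersection `N` of these subgroups has pseudocharacter at
most `τ · ℵ₀ = τ`; it cannot be smaller, since `G` would then be pseudo-`ψ(G ⧸ N)`-fine and
`N ⊆ ⋂ Uᵢ` would contain a countable intersection of identity neighbourhoods.
-/

section PseudoCharacter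

variable {X : Type u} [TopologicalSpace X]

lemma psiAt_le_mk_of_sInter_eq_singleton {x : X} {S : Set (Set X)}
    (hS : ∀ U ∈ S, IsOpen U ∧ x ∈ U) (hSx : ⋂₀ S = {x}) : psiAt X x ≤ #S := by
  unfold psiAt
  exact csInf_le' ⟨S, hS, hSx, rfl⟩

lemma exists_sInter_eq_singleton_mk_le [T1Space X] (x : X) :
    ∃ S : Set (Set X), (∀ U ∈ S, IsOpen U ∧ x ∈ U) ∧ ⋂₀ S = {x} ∧ #S ≤ #X := by
  refine ⟨(fun y => {y}ᶜ) '' {x}ᶜ, ?_, ?_, Cardinal.mk_image_le.trans (Cardinal.mk_set_le _)⟩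
  · rintro _ ⟨y, hy, rfl⟩
    exact ⟨isOpen_compl_singleton, Ne.symm hy⟩
  · ext z
    simp only [Set.sInter_image, Set.mem_iInter, Set.mem_compl_singleton_iff,
      Set.mem_singleton_iff]
    exact ⟨fun h => by_contra fun hz => h z hz rfl, by rintro rfl y hy rfl; exact hy rfl⟩

lemma psiAt_le_mk [T1Space X] (x : X) : psiAt X x ≤ #X :=
  let ⟨_, hS, hSx, hcard⟩ := exists_sInter_eq_singleton_mk_le x
  (psiAt_le_mk_of_sInter_eq_singleton hS hSx).trans hcard

lemma exists_sInter_eq_singleton_mk_eq_psiAt [T1Space X] (x : X) :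
    ∃ S : Set (Set X), (∀ U ∈ S, IsOpen U ∧ x ∈ U) ∧ ⋂₀ S = {x} ∧ #S = psiAt X x :=
  let ⟨S, hS, hSx, _⟩ := exists_sInter_eq_singleton_mk_le x
  csInf_mem (s := {c | ∃ S : Set (Set X), (∀ U ∈ S, IsOpen U ∧ x ∈ U) ∧ ⋂₀ S = {x} ∧ #S = c})
    ⟨_, S, hS, hSx, rfl⟩

end PseudoCharacter

section PseudoFineness

variable {G : Type u} [TopologicalSpace G] [Group G] {τ : Cardinal.{u}}

lemma pfi_le_of_not_isPseudoTauFine (h : ¬ IsPseudoTauFine τ G) : pfi G ≤ τ :=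
  csInf_le' h

lemma isPseudoTauFine_of_lt_pfi (h : τ < pfi G) : IsPseudoTauFine τ G :=
  by_contra fun hτ => (pfi_le_of_not_isPseudoTauFine hτ).not_gt h

lemma not_isPseudoTauFine_pfi (h : pfi G ≠ 0) : ¬ IsPseudoTauFine (pfi G) G :=
  csInf_mem (s := {τ | ¬ IsPseudoTauFine τ G}) (Set.nonempty_iff_ne_empty.2 fun hempty =>
    h (by rw [pfi, hempty, Cardinal.sInf_empty]))

end PseudoFineness

section SquareChain

variable {G : Type u} [TopologicalSpace G] [Group G]

structure IsSquareChain (W : ℕ → Set G) : Prop where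
  mem_nhds : ∀ n, W n ∈ 𝓝 (1 : G)
  inv_eq : ∀ n, (W n)⁻¹ = W n
  mul_subset : ∀ n, W (n + 1) * W (n + 1) ⊆ W n

namespace IsSquareChain

variable {W : ℕ → Set G}

def subgroup (hW : IsSquareChain W) : Subgroup G where
  carrier := ⋂ n, W n
  one_mem' := Set.mem_iInter.2 fun n => mem_of_mem_nhds (hW.mem_nhds n)
  mul_mem' ha hb := Set.mem_iInter.2 fun n =>
    hW.mul_subset n (Set.mul_mem_mul (Set.mem_iInter.1 ha _) (Set.mem_iInter.1 hb _))
  inv_mem' ha := Set.mem_iInter.2 fun n => hW.inv_eq n ▸ Set.inv_mem_inv.2 (Set.mem_iInter.1 ha n)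

lemma coe_subgroup (hW : IsSquareChain W) : (hW.subgroup : Set G) = ⋂ n, W n := rfl

variable [IsTopologicalGroup G]

lemma isClosed_subgroup (hW : IsSquareChain W) : IsClosed (hW.subgroup : Set G) :=
  isClosed_of_closure_subset fun _ hx => Set.mem_iInter.2 fun n =>
    hW.mul_subset n <| closure_subset_mul_self_of_mem_nhds_one (hW.mem_nhds (n + 1)) <|
      closure_mono (Set.iInter_subset _ _) hx

end IsSquareChain

lemma exists_isSquareChain_subset [IsTopologicalGroup G] {U : Set G} (hU : U ∈ 𝓝 (1 : G)) :
    ∃ W : ℕ → Set G, IsSquareChain W ∧ W 0 ⊆ U := by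
  choose half hhalf _ hinv hmul using
    fun A : {A : Set G // A ∈ 𝓝 (1 : G)} => exists_closed_nhds_one_inv_eq_mul_subset A.2
  let step : {A : Set G // A ∈ 𝓝 (1 : G)} → {A : Set G // A ∈ 𝓝 (1 : G)} :=
    fun A => ⟨half A, hhalf A⟩
  refine ⟨fun n => half (step^[n] ⟨U, hU⟩), ⟨fun n => hhalf _, fun n => hinv _, fun n => ?_⟩,
    (Set.subset_mul_left _ (mem_of_mem_nhds (hhalf _))).trans (hmul _)⟩
  simpa only [Function.iterate_succ_apply'] using hmul (step^[n + 1] ⟨U, hU⟩)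

end SquareChain

section QuotientPseudoCharacter

variable {G : Type u} [TopologicalSpace G] [Group G] [IsTopologicalGroup G]

lemma IsPseudoTauFine.exists_iInter_subset {τ : Cardinal.{u}} (hfine : IsPseudoTauFine τ G)
    {N : Subgroup G} (hN : IsClosed (N : Set G))
    (hτ : psiAt (G ⧸ N) (QuotientGroup.mk 1) ≤ τ) :
    ∃ V : ℕ → Set G, (∀ n, V n ∈ 𝓝 (1 : G)) ∧ (⋂ n, V n) ⊆ N := by
  have := QuotientGroup.t1Space_iff.2 hN
  obtain ⟨S, hS, hSx, hcard⟩ :=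
    exists_sInter_eq_singleton_mk_eq_psiAt (QuotientGroup.mk 1 : G ⧸ N)
  obtain ⟨V, hV, hVS⟩ := hfine S (fun U => QuotientGroup.mk ⁻¹' (U : Set (G ⧸ N)))
    (hcard.trans_le hτ)
    fun U => ((hS U U.2).1.preimage QuotientGroup.continuous_mk).mem_nhds (hS U U.2).2
  refine ⟨V, hV, fun x hx => ?_⟩
  have hx : (x : G ⧸ N) ∈ ⋂₀ S := fun U hU => Set.mem_iInter.1 (hVS hx) ⟨U, hU⟩
  rw [hSx, ← Set.mem_preimage, QuotientGroup.preimage_mk_one] at hx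
  exact hx

lemma PrecompactGroup.mk_quotient_le_continuum (hG : PrecompactGroup G) {V : ℕ → Set G}
    (hV : ∀ n, V n ∈ 𝓝 (1 : G)) {N : Subgroup G} (hVN : (⋂ n, V n) ⊆ N) :
    #(G ⧸ N) ≤ 𝔠 := by
  choose W hW _ hWinv hWV using fun n => exists_closed_nhds_one_inv_eq_mul_subset (hV n)
  choose F hF using fun n => hG _ (hW n)
  have hcover : ∀ n x, ∃ g ∈ F n, g⁻¹ * x ∈ W n := fun n x => by
    simpa [Set.mem_smul_set_iff_inv_smul_mem] using hF n (Set.mem_univ x)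
  choose c hcF hcW using hcover
  have hc : ∀ x y : G, (∀ n, c n x = c n y) → (x : G ⧸ N) = y := fun x y h => by
    refine QuotientGroup.eq.2 (hVN (Set.mem_iInter.2 fun n => hWV n ?_))
    have hxy : ((c n x)⁻¹ * x)⁻¹ * ((c n x)⁻¹ * y) = x⁻¹ * y := by group
    rw [← hxy]
    exact Set.mul_mem_mul (hWinv n ▸ Set.inv_mem_inv.2 (hcW n x)) (h n ▸ hcW n y)
  choose e he using fun n => Countable.exists_injective_nat (F n)
  let k : G ⧸ N → ℕ → ℕ := fun q n => e n ⟨c n q.out, hcF n _⟩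
  have hk : Function.Injective k := fun q q' h => by
    simpa using hc q.out q'.out fun n => congrArg Subtype.val (he n (congrFun h n))
  simpa using Cardinal.lift_mk_le'.2 ⟨⟨k, hk⟩⟩

lemma not_isPseudoTauFine_psiAt_quotient (hG : PrecompactGroup G) {N : Subgroup G}
    (hN : IsClosed (N : Set G)) (hψ : 𝔠 < psiAt (G ⧸ N) (QuotientGroup.mk 1)) :
    ¬ IsPseudoTauFine (psiAt (G ⧸ N) (QuotientGroup.mk 1)) G := fun hfine => by
  have := QuotientGroup.t1Space_iff.2 hN
  obtain ⟨V, hV, hVN⟩ := hfine.exists_iInter_subset hN le_rfl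
  exact ((psiAt_le_mk _).trans (hG.mk_quotient_le_continuum hV hVN)).not_gt hψ

lemma psiAt_quotient_le_of_eq_iInter {J : Type u} {W : J → Set G} (hW : ∀ j, W j ∈ 𝓝 (1 : G))
    (hmul : ∀ j, ∃ j', W j' * W j' ⊆ W j) {N : Subgroup G} (hN : (N : Set G) = ⋂ j, W j) :
    psiAt (G ⧸ N) (QuotientGroup.mk 1) ≤ #J := by
  let S : Set (Set (G ⧸ N)) := Set.range fun j => QuotientGroup.mk '' interior (W j)
  have hS : ∀ U ∈ S, IsOpen U ∧ (QuotientGroup.mk 1 : G ⧸ N) ∈ U := by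
    rintro _ ⟨j, rfl⟩
    exact ⟨QuotientGroup.isOpenMap_coe _ isOpen_interior,
      Set.mem_image_of_mem _ (mem_interior_iff_mem_nhds.2 (hW j))⟩
  have hSx : ⋂₀ S = {QuotientGroup.mk 1} := by
    refine Set.Subset.antisymm (fun q hq => ?_) fun q hq => hq ▸ fun U hU => (hS U hU).2
    obtain ⟨x, rfl⟩ := QuotientGroup.mk_surjective q
    show x ∈ QuotientGroup.mk ⁻¹' {QuotientGroup.mk 1}
    rw [QuotientGroup.preimage_mk_one, hN]
    refine Set.mem_iInter.2 fun j => ?_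
    obtain ⟨j', hj'⟩ := hmul j
    obtain ⟨w, hw, hwx⟩ := hq _ ⟨j', rfl⟩
    have hwN : w⁻¹ * x ∈ (N : Set G) := QuotientGroup.eq.1 hwx
    rw [hN] at hwN
    exact hj' ⟨w, interior_subset hw, w⁻¹ * x, Set.mem_iInter.1 hwN j', mul_inv_cancel_left w x⟩
  exact (psiAt_le_mk_of_sInter_eq_singleton hS hSx).trans Cardinal.mk_range_le

lemma exists_isClosed_psiAt_quotient_eq_pfi (h : ℵ₀ ≤ pfi G) :
    ∃ N : Subgroup G, IsClosed (N : Set G) ∧ psiAt (G ⧸ N) (QuotientGroup.mk 1) = pfi G := by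
  have hnot := not_isPseudoTauFine_pfi (G := G) (aleph0_pos.trans_le h).ne'
  simp only [IsPseudoTauFine, not_forall, not_exists, not_and] at hnot
  obtain ⟨ι, U, hι, hU, hnoV⟩ := hnot
  choose W hW hWU using fun i => exists_isSquareChain_subset (hU i)
  let N : Subgroup G := ⨅ i, (hW i).subgroup
  have hNW : (N : Set G) = ⋂ p : ι × ℕ, W p.1 p.2 := by
    simp only [N, Subgroup.coe_iInf, IsSquareChain.coe_subgroup]
    exact iInf_prod' _
  have hNc : IsClosed (N : Set G) := by
    simpa only [N, Subgroup.coe_iInf] using isClosed_iInter fun i => (hW i).isClosed_subgroup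
  have hNU : (N : Set G) ⊆ ⋂ i, U i := fun x hx => by
    rw [hNW] at hx
    exact Set.mem_iInter.2 fun i => hWU i (Set.mem_iInter.1 hx (i, 0))
  have hle : psiAt (G ⧸ N) (QuotientGroup.mk 1) ≤ pfi G := by
    refine (psiAt_quotient_le_of_eq_iInter (fun p => (hW p.1).mem_nhds p.2)
      (fun p => ⟨(p.1, p.2 + 1), (hW p.1).mul_subset p.2⟩) hNW).trans ?_
    calc #(ι × ℕ) = #ι * ℵ₀ := by simp
      _ ≤ pfi G * pfi G := mul_le_mul' hι h
      _ = pfi G := Cardinal.mul_eq_self h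
  refine ⟨N, hNc, le_antisymm hle (not_lt.1 fun hlt => ?_)⟩
  obtain ⟨V, hV, hVN⟩ := (isPseudoTauFine_of_lt_pfi hlt).exists_iInter_subset hNc le_rfl
  exact hnoV V hV (hVN.trans hNU)

end QuotientPseudoCharacter

theorem statement_4_general (G : Type u) [TopologicalSpace G] [CommGroup G] [IsTopologicalGroup G]
    (hpre : PrecompactGroup G) :
    pfi G ≤ Cardinal.continuum ∨
      pfi G = sInf {τ : Cardinal.{u} | Cardinal.continuum < τ ∧
        ∃ N : Subgroup G, IsClosed (N : Set G) ∧
          psiAt (G ⧸ N) (QuotientGroup.mk 1) = τ} := by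
  refine or_iff_not_imp_left.2 fun hc => ?_
  replace hc : 𝔠 < pfi G := not_le.1 hc
  obtain ⟨N, hN, hψN⟩ := exists_isClosed_psiAt_quotient_eq_pfi (aleph0_le_continuum.trans hc.le)
  refine le_antisymm (le_csInf ⟨pfi G, hc, N, hN, hψN⟩ ?_) (csInf_le' ⟨hc, N, hN, hψN⟩)
  rintro _ ⟨hτ, M, hM, rfl⟩
  exact pfi_le_of_not_isPseudoTauFine (not_isPseudoTauFine_psiAt_quotient hpre hM hτ)

theorem statement_4 (G : Type u) [TopologicalSpace G] [CommGroup G] [IsTopologicalGroup G]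
    [T2Space G] (hpre : PrecompactGroup G) (hψ : ℵ₀ < psi G) :
    pfi G ≤ Cardinal.continuum ∨
      pfi G = sInf {τ : Cardinal.{u} | Cardinal.continuum < τ ∧
        ∃ N : Subgroup G, IsClosed (N : Set G) ∧
          psiAt (G ⧸ N) (QuotientGroup.mk 1) = τ} :=
  statement_4_general G hpre
end

section
/- Let G be a precompact abelian topological group whose pseudocharacter ψ(G) is uncountable. Then pfi(G) ≤ (2^𝔠)⁺, the successor cardinal of 2^𝔠. -/
open Cardinal Topology Pointwise

universe u

/-!
Call a subgroup *halving* if it is `⋂ n, O n` for symmetric identity neighbourhoods with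
`O (n + 1) * O (n + 1) ⊆ O n`. Put `κ = (2 ^ 𝔠)⁺` and suppose `G` is pseudo-`κ`-fine. Then any
`κ` halving subgroups contain a common halving subgroup; since `ψ(G) > ℵ₀` a halving subgroup is
never trivial, so it contains a strictly smaller one. Transfinite recursion yields a strictly
decreasing `κ`-sequence of halving subgroups, all containing one halving subgroup `N`. By
precompactness `N` has index at most `𝔠` (a coset is coded by the centres of finitely many
translates of each `O (n + 1)`), so only `2 ^ 𝔠 < κ` subgroups contain `N`: a contradiction.
-/

open Set

theorem psiAt_le_aleph0_of_iInter_subset {X : Type u} [TopologicalSpace X] {x : X} (O : ℕ → Set X)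
    (hO : ∀ n, O n ∈ 𝓝 x) (hOx : ⋂ n, O n ⊆ {x}) : psiAt X x ≤ ℵ₀ := by
  have hint : ⋂ n, interior (O n) = {x} :=
    ((iInter_mono fun n => interior_subset).trans hOx).antisymm
      (singleton_subset_iff.2 (mem_iInter.2 fun n => mem_interior_iff_mem_nhds.2 (hO n)))
  have hmem : #(range fun n => interior (O n)) ∈
      {c | ∃ S : Set (Set X), (∀ U ∈ S, IsOpen U ∧ x ∈ U) ∧ ⋂₀ S = {x} ∧ #S = c} := by
    refine ⟨_, ?_, by rwa [sInter_range], rfl⟩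
    rintro _ ⟨n, rfl⟩
    exact ⟨isOpen_interior, mem_interior_iff_mem_nhds.2 (hO n)⟩
  exact (csInf_le' hmem).trans (countable_range _).le_aleph0

theorem card_Ici_subgroup_le {G : Type u} [Group G] (N : Subgroup G) :
    #(Ici N) ≤ 2 ^ #(G ⧸ N) := by
  have preimage_image : ∀ H ∈ Ici N,
      QuotientGroup.mk ⁻¹' (QuotientGroup.mk '' (H : Set G) : Set (G ⧸ N)) = H := by
    refine fun H hH => (subset_preimage_image _ _).antisymm' ?_
    rintro x ⟨y, hy, hyx⟩
    simpa using H.mul_mem hy (hH (QuotientGroup.eq.1 hyx))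
  have hinj : Function.Injective fun H : Ici N =>
      (QuotientGroup.mk '' (H : Set G) : Set (G ⧸ N)) := fun H₁ H₂ h =>
    Subtype.ext <| SetLike.coe_injective <| by
      rw [← preimage_image H₁ H₁.2, ← preimage_image H₂ H₂.2]
      exact congrArg _ h
  exact (mk_le_of_injective hinj).trans mk_set.le

theorem exists_strictAnti_of_forall_exists_lt {α P : Type u} [LinearOrder α] [WellFoundedLT α]
    [Preorder P] {κ : Cardinal.{u}} (hα : ∀ a : α, #(Iio a) ≤ κ)
    (hP : ∀ s : Set P, #s ≤ κ → ∃ q, ∀ p ∈ s, q < p) : ∃ f : α → P, StrictAnti f := by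
  choose bound hbound using hP
  let f : α → P := wellFounded_lt.fix fun a g =>
    bound (range fun b : Iio a => g b b.2) (mk_range_le.trans (hα a))
  refine ⟨f, fun b a hba => ?_⟩
  rw [show f a = _ from wellFounded_lt.fix_eq _ a]
  exact hbound _ _ _ ⟨⟨b, hba⟩, rfl⟩

section Halving

variable {G : Type u} [TopologicalSpace G] [Group G]

structure IsHalvingChain (O : ℕ → Set G) : Prop where
  mem_nhds : ∀ n, O n ∈ 𝓝 (1 : G)
  inv_eq : ∀ n, (O n)⁻¹ = O n
  mul_subset : ∀ n, O (n + 1) * O (n + 1) ⊆ O n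

namespace IsHalvingChain

variable {O : ℕ → Set G}

theorem one_mem (h : IsHalvingChain O) (n : ℕ) : (1 : G) ∈ O n :=
  mem_of_mem_nhds (h.mem_nhds n)

theorem inv_mul_mem (h : IsHalvingChain O) {n : ℕ} {x y : G} (hx : x ∈ O (n + 1))
    (hy : y ∈ O (n + 1)) : x⁻¹ * y ∈ O n :=
  h.mul_subset n (mul_mem_mul (h.inv_eq (n + 1) ▸ inv_mem_inv.2 hx) hy)

def subgroup (h : IsHalvingChain O) : Subgroup G where
  carrier := ⋂ n, O n
  one_mem' := mem_iInter.2 h.one_mem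
  mul_mem' hx hy :=
    mem_iInter.2 fun n => h.mul_subset n (mul_mem_mul (mem_iInter.1 hx _) (mem_iInter.1 hy _))
  inv_mem' hx := mem_iInter.2 fun n => h.inv_eq n ▸ inv_mem_inv.2 (mem_iInter.1 hx n)

theorem card_quotient_le_continuum (h : IsHalvingChain O) (hpre : PrecompactGroup G) :
    #(G ⧸ h.subgroup) ≤ 𝔠 := by
  choose F hF using fun n => hpre _ (h.mem_nhds (n + 1))
  have cover : ∀ (x : G) (n : ℕ), ∃ g : F n, (g : G)⁻¹ * x ∈ O (n + 1) := fun x n => by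
    obtain ⟨g, hg, hx⟩ := mem_iUnion₂.1 (hF n (mem_univ x))
    exact ⟨⟨g, hg⟩, by simpa [mem_smul_set_iff_inv_smul_mem] using hx⟩
  choose c hc using cover
  -- two points coded by the same centres lie in a common translate of every `O (n + 1)`
  have hinj : Function.Injective fun q : G ⧸ h.subgroup => c q.out :=
    fun p q (hpq : c p.out = c q.out) => by
    rw [← QuotientGroup.out_eq' p, ← QuotientGroup.out_eq' q, QuotientGroup.eq]
    refine mem_iInter.2 fun n => ?_
    have hq := hc q.out n
    rw [← congrFun hpq n] at hq
    simpa [mul_assoc] using h.inv_mul_mem (hc p.out n) hq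
  calc #(G ⧸ h.subgroup) ≤ #(∀ n, F n) := mk_le_of_injective hinj
    _ = prod fun n => #(F n) := mk_pi _
    _ ≤ prod fun _ : ℕ => ℵ₀ := prod_le_prod _ _ fun n => mk_le_aleph0
    _ = 𝔠 := by simp

end IsHalvingChain

theorem exists_isHalvingChain_subset [IsTopologicalGroup G] (V : ℕ → Set G)
    (hV : ∀ n, V n ∈ 𝓝 (1 : G)) : ∃ O : ℕ → Set G, IsHalvingChain O ∧ ∀ n, O n ⊆ V n := by
  have exists_half : ∀ U : {U : Set G // U ∈ 𝓝 (1 : G)},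
      ∃ W : Set G, W ∈ 𝓝 (1 : G) ∧ W⁻¹ = W ∧ W * W ⊆ U := fun U => by
    obtain ⟨W, hW, -, hWinv, hWU⟩ := exists_closed_nhds_one_inv_eq_mul_subset U.2
    exact ⟨W, hW, hWinv, hWU⟩
  choose half half_mem half_inv half_mul using exists_half
  let O : ℕ → {U : Set G // U ∈ 𝓝 (1 : G)} := fun n =>
    Nat.rec ⟨half ⟨V 0, hV 0⟩, half_mem _⟩
      (fun n U => ⟨half ⟨U ∩ V (n + 1), Filter.inter_mem U.2 (hV _)⟩, half_mem _⟩) n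
  have chain : IsHalvingChain fun n => (O n).1 := by
    refine ⟨fun n => (O n).2, fun n => ?_, fun n => ?_⟩
    · cases n <;> exact half_inv _
    · exact (half_mul _).trans inter_subset_left
  refine ⟨_, chain, fun n x hx => ?_⟩
  have hxx : x ∈ (O n).1 * (O n).1 := by simpa using mul_mem_mul hx (chain.one_mem n)
  cases n with
  | zero => exact half_mul _ hxx
  | succ n => exact (half_mul _ hxx).2

variable (G) in
def halvingSubgroups : Set (Subgroup G) :=
  {N | ∃ (O : ℕ → Set G) (h : IsHalvingChain O), h.subgroup = N}

theorem exists_halvingSubgroup_lt [IsTopologicalGroup G] [T1Space G] (hψ : ℵ₀ < psi G)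
    {N : Subgroup G} (hN : N ∈ halvingSubgroups G) : ∃ M ∈ halvingSubgroups G, M < N := by
  obtain ⟨O, hO, rfl⟩ := hN
  obtain ⟨x, hxO, hx1⟩ : ∃ x ∈ ⋂ n, O n, x ≠ 1 := by
    by_contra! h
    exact (psiAt_le_aleph0_of_iInter_subset O hO.mem_nhds h).not_gt hψ
  obtain ⟨P, hP, hPO⟩ := exists_isHalvingChain_subset (fun n => O n ∩ {x}ᶜ) fun n =>
    Filter.inter_mem (hO.mem_nhds n) (isOpen_compl_singleton.mem_nhds hx1.symm)
  refine ⟨hP.subgroup, ⟨P, hP, rfl⟩, SetLike.lt_iff_le_and_exists.2 ⟨fun y hy => ?_, x, hxO, ?_⟩⟩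
  · exact mem_iInter.2 fun n => (hPO n (mem_iInter.1 hy n)).1
  · exact fun hx => (hPO 0 (mem_iInter.1 hx 0)).2 rfl

namespace IsPseudoTauFine

variable [IsTopologicalGroup G] {τ : Cardinal.{u}}

theorem exists_isHalvingChain_iInter_subset (hfine : IsPseudoTauFine τ G) {ι : Type u}
    (U : ι → Set G) (hU : ∀ i, U i ∈ 𝓝 (1 : G)) (hι : #ι ≤ τ) :
    ∃ O : ℕ → Set G, IsHalvingChain O ∧ ⋂ n, O n ⊆ ⋂ i, U i := by
  obtain ⟨V, hV, hVU⟩ := hfine ι U hι hU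
  obtain ⟨O, hO, hOV⟩ := exists_isHalvingChain_subset V hV
  exact ⟨O, hO, (iInter_mono hOV).trans hVU⟩

theorem exists_halvingSubgroup_le (hfine : IsPseudoTauFine τ G) (hτ : ℵ₀ ≤ τ) {ι : Type u}
    (N : ι → Subgroup G) (hN : ∀ i, N i ∈ halvingSubgroups G) (hι : #ι ≤ τ) :
    ∃ M ∈ halvingSubgroups G, ∀ i, M ≤ N i := by
  choose O hO hON using hN
  have hcard : #(ι × ULift.{u} ℕ) ≤ τ := by
    rw [mk_prod, lift_id, lift_id, ← mul_eq_self hτ]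
    exact mul_le_mul' hι (mk_le_aleph0.trans hτ)
  obtain ⟨P, hP, hPO⟩ := hfine.exists_isHalvingChain_iInter_subset
    (fun p : ι × ULift.{u} ℕ => O p.1 p.2.down) (fun p => (hO p.1).mem_nhds _) hcard
  refine ⟨hP.subgroup, ⟨P, hP, rfl⟩, fun i x hx => ?_⟩
  rw [← hON i]
  exact mem_iInter.2 fun n => mem_iInter.1 (hPO hx) (i, ⟨n⟩)

theorem exists_halvingSubgroup_forall_lt [T1Space G] (hfine : IsPseudoTauFine τ G)
    (hτ : ℵ₀ ≤ τ) (hψ : ℵ₀ < psi G) (s : Set (halvingSubgroups G)) (hs : #s ≤ τ) :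
    ∃ M : halvingSubgroups G, ∀ N ∈ s, M < N := by
  obtain ⟨M, hM, hMs⟩ :=
    hfine.exists_halvingSubgroup_le hτ (fun N : s => N.1.1) (fun N => N.1.2) hs
  obtain ⟨M', hM', hlt⟩ := exists_halvingSubgroup_lt hψ hM
  exact ⟨⟨M', hM'⟩, fun N hN => hlt.trans_le (hMs ⟨N, hN⟩)⟩

end IsPseudoTauFine

end Halving

theorem statement_5 (G : Type u) [TopologicalSpace G] [CommGroup G] [IsTopologicalGroup G]
    [T2Space G] (hpre : PrecompactGroup G) (hψ : ℵ₀ < psi G) :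
    pfi G ≤ Order.succ ((2 : Cardinal.{u}) ^ Cardinal.continuum) := by
  set κ := Order.succ ((2 : Cardinal.{u}) ^ 𝔠)
  refine csInf_le' (show ¬IsPseudoTauFine κ G from fun hfine => ?_)
  have hκ : ℵ₀ ≤ κ := (aleph0_le_continuum.trans (cantor _).le).trans (Order.le_succ _)
  have bound := hfine.exists_halvingSubgroup_forall_lt hκ hψ
  obtain ⟨f, hf⟩ := exists_strictAnti_of_forall_exists_lt (α := κ.ord.ToType)
    (fun a => (mk_Iio_lt a (by simp)).le.trans (mk_ord_toType κ).le) bound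
  obtain ⟨⟨N, O, hO, rfl⟩, hNf⟩ := bound (range f) (mk_range_le.trans (mk_ord_toType κ).le)
  have hinj : Function.Injective fun a => (⟨f a, (hNf _ ⟨a, rfl⟩).le⟩ : Ici hO.subgroup) :=
    fun a b hab => hf.injective (Subtype.ext (Subtype.mk.inj hab))
  have : κ ≤ 2 ^ 𝔠 := calc
    κ = #κ.ord.ToType := (mk_ord_toType κ).symm
    _ ≤ #(Ici hO.subgroup) := mk_le_of_injective hinj
    _ ≤ 2 ^ #(G ⧸ hO.subgroup) := card_Ici_subgroup_le _
    _ ≤ 2 ^ 𝔠 := power_le_power_left two_ne_zero (hO.card_quotient_le_continuum hpre)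
  exact (Order.lt_succ _).not_ge this
end

section
/- For every uncountable regular cardinal τ ≤ 𝔠⁺ there exists a precompact abelian (Hausdorff) topological group G with pfi(G) = τ; that is, G has uncountable pseudocharacter, is pseudo-λ-fine for every infinite cardinal λ < τ, and is not pseudo-τ-fine. -/
open Cardinal Topology Pointwise

universe u

/-!
The group is `G = ⊕_{ξ < τ} ℤ/2` with the weakest topology making continuous the characters
`χ_{α,U}(b) = ∑ {b ξ | ξ ≤ α, h_α ξ ∈ U}`, for `α < τ` and `U` in a countable base of `ℝ`, where
`h_α : [0, α] → ℝ` is injective; it exists because `|α| ≤ 𝔠` when `τ ≤ 𝔠⁺`. Isolating one point of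
a finite subset of `ℝ` by a basic open set shows that the countably many `χ_{α,U}` detect every
element with a support point `≤ α`, while they all vanish on elements supported above `α`.

By regularity, the levels `α` of fewer than `τ` characters are bounded by some `γ < τ`, and the
countably many `χ_{γ,U}` cut out a subgroup contained in all their kernels: `G` is pseudo-`λ`-fine
for `λ < τ`. A countable set of characters is bounded by some `γ` as well and misses the unit
vector `e_γ`; so `{1}` is not a `G_δ`, and the `τ` kernels of all characters witness that `G` is
not pseudo-`τ`-fine. Since the characters take finitely many values, `G` is precompact.
-/

open Filter Set

section PseudoFineness

variable {G : Type u} [TopologicalSpace G] [Group G]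

theorem IsPseudoTauFine.mono {κ μ : Cardinal.{u}} (hκμ : κ ≤ μ) (h : IsPseudoTauFine μ G) :
    IsPseudoTauFine κ G :=
  fun ι U hι hU => h ι U (hι.trans hκμ) hU

theorem pfi_eq_of_isPseudoTauFine {τ : Cardinal.{u}} (hfine : ∀ κ < τ, IsPseudoTauFine κ G)
    (hτ : ¬ IsPseudoTauFine τ G) : pfi G = τ :=
  le_antisymm (csInf_le' hτ) <| le_csInf ⟨τ, hτ⟩ fun _ hκ => not_lt.mp fun hlt => hκ (hfine _ hlt)

theorem precompactGroup_of_finiteIndex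
    (h : ∀ U ∈ 𝓝 (1 : G), ∃ N : Subgroup G, N.FiniteIndex ∧ (N : Set G) ⊆ U) :
    PrecompactGroup G := by
  intro U hU
  obtain ⟨N, hN, hNU⟩ := h U hU
  have : Finite (G ⧸ N) := Subgroup.finite_quotient_of_finiteIndex
  refine ⟨(Set.finite_range fun q : G ⧸ N => q.out).toFinset, fun g _ => ?_⟩
  obtain ⟨n, hn⟩ := QuotientGroup.mk_out_eq_mul N g
  refine mem_biUnion (x := (g : G ⧸ N).out) (by simp) ?_
  rw [hn, mem_smul_set_iff_inv_smul_mem, smul_eq_mul, mul_inv_rev, inv_mul_cancel_right]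
  exact hNU (inv_mem n.2)

end PseudoFineness

theorem aleph0_lt_psiAt_of_not_isGδ {X : Type u} [TopologicalSpace X] [T1Space X] {x : X}
    (h : ¬ IsGδ {x}) : ℵ₀ < psiAt X x := by
  have hne :
      {c | ∃ S : Set (Set X), (∀ U ∈ S, IsOpen U ∧ x ∈ U) ∧ ⋂₀ S = {x} ∧ #S = c}.Nonempty := by
    refine ⟨_, {U | IsOpen U ∧ x ∈ U}, fun _ hU => hU, ?_, rfl⟩
    refine eq_singleton_iff_unique_mem.mpr ⟨fun U hU => hU.2, fun y hy => ?_⟩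
    by_contra hyx
    exact hy {y}ᶜ ⟨isOpen_compl_singleton, Ne.symm hyx⟩ rfl
  refine not_le.mp fun hle => h ?_
  obtain ⟨S, hS, hSx, hScard⟩ := csInf_mem hne
  exact ⟨S, fun U hU => (hS U hU).1, mk_le_aleph0_iff.mp (hScard.trans_le hle), hSx.symm⟩

namespace MonoidHom

section

variable {G K ι : Type*} [Group G] [Group K]

def jointKer (χ : ι → G →* K) (F : Finset ι) : Subgroup G :=
  (MonoidHom.pi fun i : F => χ i).ker

variable {χ : ι → G →* K}

theorem mem_jointKer {F : Finset ι} {g : G} : g ∈ jointKer χ F ↔ ∀ i ∈ F, χ i g = 1 := by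
  simp [jointKer, funext_iff, MonoidHom.pi_apply]

instance finiteIndex_jointKer [Finite K] (F : Finset ι) : (jointKer χ F).FiniteIndex :=
  Subgroup.finiteIndex_ker _

variable [TopologicalSpace G] [TopologicalSpace K] [DiscreteTopology K]
  (hχ : IsInducing (MonoidHom.pi χ))
include hχ

theorem hasBasis_nhds_one_jointKer :
    (𝓝 (1 : G)).HasBasis (fun _ => True) fun F => (jointKer χ F : Set G) := by
  rw [hχ.nhds_eq_comap, map_one, nhds_pi]
  simp only [Pi.one_apply, nhds_discrete]
  refine ((hasBasis_pi fun _ : ι => hasBasis_pure (1 : K)).comap (MonoidHom.pi χ)).to_hasBasis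
    (fun p hp => ⟨hp.1.toFinset, trivial, fun g hg => ?_⟩)
    fun F _ => ⟨(F, fun _ => ()), ⟨F.finite_toSet, fun _ _ => trivial⟩, fun g hg => ?_⟩ <;>
  simpa [mem_jointKer] using hg

theorem exists_jointKer_subset {U : Set G} (hU : U ∈ 𝓝 1) : ∃ F, (jointKer χ F : Set G) ⊆ U := by
  simpa using (hasBasis_nhds_one_jointKer hχ).mem_iff.mp hU

theorem ker_mem_nhds_one (i : ι) : ((χ i).ker : Set G) ∈ 𝓝 1 :=
  (hasBasis_nhds_one_jointKer hχ).mem_of_superset (i := {i}) trivial fun _ hg =>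
    mem_jointKer.mp hg i (Finset.mem_singleton_self i)

theorem exists_countable_forall_eq_one_imp_mem_sInter {𝒱 : Set (Set G)} (h𝒱 : 𝒱.Countable)
    (hV : ∀ V ∈ 𝒱, V ∈ 𝓝 1) :
    ∃ t : Set ι, t.Countable ∧ ∀ g, (∀ i ∈ t, χ i g = 1) → g ∈ ⋂₀ 𝒱 := by
  choose F hF using fun V hV' => exists_jointKer_subset hχ (hV V hV')
  have := h𝒱.to_subtype
  refine ⟨⋃ V : 𝒱, (F V V.2 : Set ι), countable_iUnion fun V => (F V V.2).countable_toSet,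
    fun g hg => mem_sInter.mpr fun V hV' => hF V hV' (mem_jointKer.mpr fun j hj => ?_)⟩
  exact hg j (mem_iUnion.mpr ⟨⟨V, hV'⟩, hj⟩)

theorem precompactGroup_of_isInducing [Finite K] : PrecompactGroup G :=
  precompactGroup_of_finiteIndex fun _ hU =>
    let ⟨F, hF⟩ := exists_jointKer_subset hχ hU
    ⟨jointKer χ F, inferInstance, hF⟩

theorem t2Space_of_isInducing (hsep : ∀ g ≠ 1, ∃ i, χ i g ≠ 1) : T2Space G :=
  (IsEmbedding.mk hχ ((injective_iff_map_eq_one _).mpr fun g hg => by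
    by_contra hg1
    obtain ⟨i, hi⟩ := hsep g hg1
    exact hi (congrFun hg i))).t2Space

theorem not_isGδ_singleton_one (h : ∀ t : Set ι, t.Countable → ∃ g ≠ 1, ∀ i ∈ t, χ i g = 1) :
    ¬ IsGδ ({1} : Set G) := by
  rintro ⟨S, hSo, hSc, hS⟩
  have hS1 : (1 : G) ∈ ⋂₀ S := hS ▸ mem_singleton 1
  obtain ⟨t, htc, ht⟩ := exists_countable_forall_eq_one_imp_mem_sInter hχ hSc
    fun U hU => (hSo U hU).mem_nhds (hS1 U hU)
  obtain ⟨g, hg1, hg⟩ := h t htc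
  exact hg1 (hS ▸ ht g hg : g ∈ ({1} : Set G))

end

variable {G ι : Type u} {K : Type*} [Group G] [Group K] {χ : ι → G →* K}
  [TopologicalSpace G] [TopologicalSpace K] [DiscreteTopology K]
  (hχ : IsInducing (MonoidHom.pi χ))
include hχ

theorem isPseudoTauFine_of_forall_exists_countable {κ : Cardinal.{u}} (hκ : ℵ₀ ≤ κ)
    (h : ∀ s : Set ι, #s ≤ κ → ∃ t : Set ι, t.Countable ∧
      ∀ g, (∀ i ∈ t, χ i g = 1) → ∀ i ∈ s, χ i g = 1) :
    IsPseudoTauFine κ G := by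
  intro α U hα hU
  choose F hF using fun a => exists_jointKer_subset hχ (hU a)
  have hcard : #(⋃ a, (F a : Set ι)) ≤ κ :=
    calc #(⋃ a, (F a : Set ι)) ≤ #α * ⨆ a, #(F a : Set ι) := mk_iUnion_le _
      _ ≤ κ * ℵ₀ := mul_le_mul' hα (ciSup_le' fun a => (F a).finite_toSet.countable.le_aleph0)
      _ = κ := mul_aleph0_eq hκ
  obtain ⟨t, htc, ht⟩ := h _ hcard
  -- `univ` is added so that the family is nonempty and can be enumerated.
  obtain ⟨V, hV⟩ := ((htc.image fun i => ((χ i).ker : Set G)).insert Set.univ).exists_eq_range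
    (insert_nonempty _ _)
  refine ⟨V, fun n => ?_, fun g hg => mem_iInter.mpr fun a => hF a ?_⟩
  · rcases (hV ▸ mem_range_self n : V n ∈ _) with hn | ⟨i, -, hi⟩
    · exact hn ▸ univ_mem
    · exact hi ▸ ker_mem_nhds_one hχ i
  · refine mem_jointKer.mpr fun j hj => ht g (fun i hi => ?_) j (mem_iUnion.mpr ⟨a, hj⟩)
    obtain ⟨n, hn⟩ : ((χ i).ker : Set G) ∈ Set.range V := by
      rw [← hV]; exact mem_insert_of_mem _ ⟨i, hi, rfl⟩
    exact (hn ▸ mem_iInter.mp hg n : g ∈ ((χ i).ker : Set G))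

theorem not_isPseudoTauFine_of_forall_countable {τ : Cardinal.{u}} (hι : #ι ≤ τ)
    (hsep : ∀ g ≠ 1, ∃ i, χ i g ≠ 1)
    (h : ∀ t : Set ι, t.Countable → ∃ g ≠ 1, ∀ i ∈ t, χ i g = 1) :
    ¬ IsPseudoTauFine τ G := by
  intro hfine
  obtain ⟨V, hV, hVU⟩ := hfine ι (fun i => (χ i).ker) hι (ker_mem_nhds_one hχ)
  obtain ⟨t, htc, ht⟩ := exists_countable_forall_eq_one_imp_mem_sInter hχ (countable_range V)
    (forall_mem_range.mpr hV)
  obtain ⟨g, hg1, hg⟩ := h t htc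
  obtain ⟨i, hi⟩ := hsep g hg1
  exact hi (mem_iInter.mp (hVU (sInter_range V ▸ ht g hg)) i)

end MonoidHom

namespace Finsupp

variable {T A : Type*} [AddCommGroup A]

noncomputable def sumOn (s : Set T) : (T →₀ A) →+ A :=
  open Classical in liftAddHom fun ξ => if ξ ∈ s then AddMonoidHom.id A else 0

theorem sumOn_apply (s : Set T) [DecidablePred (· ∈ s)] (b : T →₀ A) :
    sumOn s b = ∑ ξ ∈ b.support with ξ ∈ s, b ξ := by
  classical
  rw [sumOn, liftAddHom_apply, sum, Finset.sum_filter]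
  refine Finset.sum_congr rfl fun ξ _ => ?_
  split_ifs <;> simp

theorem sumOn_eq_zero {s : Set T} {b : T →₀ A} (h : ∀ ξ ∈ b.support, ξ ∉ s) :
    sumOn s b = 0 := by
  classical
  rw [sumOn_apply]
  exact Finset.sum_eq_zero fun ξ hξ =>
    absurd (Finset.mem_filter.mp hξ).2 (h ξ (Finset.mem_filter.mp hξ).1)

theorem sumOn_eq_apply {s : Set T} {b : T →₀ A} {ξ₀ : T} (hξ₀ : ξ₀ ∈ s)
    (h : ∀ ξ ∈ b.support, ξ ∈ s → ξ = ξ₀) : sumOn s b = b ξ₀ := by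
  classical
  rw [sumOn_apply, Finset.sum_eq_single ξ₀]
  · exact fun ξ hξ hne => absurd (h ξ (Finset.mem_filter.mp hξ).1 (Finset.mem_filter.mp hξ).2) hne
  · intro hξ₀'
    simpa [hξ₀] using hξ₀'

theorem exists_sumOn_ne_zero {Y : Type*} [TopologicalSpace Y] [T1Space Y] {B : Set (Set Y)}
    (hB : TopologicalSpace.IsTopologicalBasis B) {s : Set T} {f : T → Y} (hf : InjOn f s)
    {b : T →₀ A} {ξ₀ : T} (hξ₀ : ξ₀ ∈ s) (hb : b ξ₀ ≠ 0) :
    ∃ U ∈ B, sumOn (s ∩ f ⁻¹' U) b ≠ 0 := by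
  let S := f '' {ξ | ξ ∈ b.support ∧ ξ ∈ s ∧ ξ ≠ ξ₀}
  have hS : S.Finite := (b.support.finite_toSet.subset fun _ hξ => hξ.1).image f
  have hξ₀S : f ξ₀ ∉ S := by
    rintro ⟨ξ, ⟨-, hξs, hne⟩, hfξ⟩
    exact hne (hf hξs hξ₀ hfξ)
  obtain ⟨U, hUB, hξ₀U, hU⟩ := hB.exists_subset_of_mem_open hξ₀S hS.isClosed.isOpen_compl
  refine ⟨U, hUB, ?_⟩
  rwa [sumOn_eq_apply (show ξ₀ ∈ s ∩ f ⁻¹' U from ⟨hξ₀, hξ₀U⟩) fun ξ hξ hξsU => ?_]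
  by_contra hne
  exact hU hξsU.2 ⟨ξ, ⟨hξ, hξsU.1, hne⟩, rfl⟩

end Finsupp

section LevelCharacters

variable {T : Type*} [LinearOrder T] {A : Type*} [AddCommGroup A] {Y : Type*} {B : Set (Set Y)}

-- The character `χ_{α,U}` of the introduction, written multiplicatively like the group.
noncomputable def levelChar (h : T → T → Y) (i : T × B) :
    Multiplicative (T →₀ A) →* Multiplicative A :=
  (Finsupp.sumOn (Iic i.1 ∩ h i.1 ⁻¹' i.2)).toMultiplicative

variable {h : T → T → Y}

theorem levelChar_eq_one_iff {i : T × B} {g : Multiplicative (T →₀ A)} :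
    levelChar h i g = 1 ↔ Finsupp.sumOn (Iic i.1 ∩ h i.1 ⁻¹' i.2) g.toAdd = 0 :=
  ofAdd_eq_one

theorem levelChar_eq_one_of_lt {i : T × B} {g : Multiplicative (T →₀ A)}
    (hg : ∀ ξ ∈ g.toAdd.support, i.1 < ξ) : levelChar h i g = 1 :=
  levelChar_eq_one_iff.mpr <| Finsupp.sumOn_eq_zero fun ξ hξ hξi => not_le.mpr (hg ξ hξ) hξi.1

theorem exists_ne_one_forall_levelChar_eq_one [Nontrivial A] {t : Set (T × B)} {γ : T}
    (hγ : ∀ i ∈ t, i.1 < γ) :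
    ∃ g : Multiplicative (T →₀ A), g ≠ 1 ∧ ∀ i ∈ t, levelChar h i g = 1 := by
  obtain ⟨a, ha⟩ := exists_ne (0 : A)
  refine ⟨Multiplicative.ofAdd (Finsupp.single γ a : T →₀ A), by simpa using ha, fun i hi =>
    levelChar_eq_one_of_lt fun ξ hξ => ?_⟩
  rw [Finset.mem_singleton.mp (Finsupp.support_single_subset hξ)]
  exact hγ i hi

variable [TopologicalSpace Y] [T1Space Y] (hB : TopologicalSpace.IsTopologicalBasis B)
include hB

theorem exists_levelChar_ne_one {α ξ : T} (hinj : InjOn (h α) (Iic α)) (hξ : ξ ≤ α)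
    {g : Multiplicative (T →₀ A)} (hg : g.toAdd ξ ≠ 0) : ∃ U : B, levelChar h (α, U) g ≠ 1 := by
  obtain ⟨U, hU, hne⟩ := Finsupp.exists_sumOn_ne_zero hB hinj (mem_Iic.mpr hξ) hg
  exact ⟨⟨U, hU⟩, mt levelChar_eq_one_iff.mp hne⟩

theorem exists_levelChar_ne_one_of_ne_one (hinj : ∀ α, InjOn (h α) (Iic α))
    {g : Multiplicative (T →₀ A)} (hg : g ≠ 1) : ∃ i : T × B, levelChar h i g ≠ 1 := by
  obtain ⟨ξ, hξ⟩ := Finsupp.support_nonempty_iff.mpr (toAdd_eq_zero.not.mpr hg)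
  obtain ⟨U, hU⟩ := exists_levelChar_ne_one hB (hinj ξ) le_rfl (Finsupp.mem_support_iff.mp hξ)
  exact ⟨_, hU⟩

theorem levelChar_eq_one_of_forall_levelChar_eq_one {γ : T} (hinj : InjOn (h γ) (Iic γ))
    {i : T × B} (hi : i.1 < γ) {g : Multiplicative (T →₀ A)}
    (hg : ∀ U : B, levelChar h (γ, U) g = 1) : levelChar h i g = 1 :=
  levelChar_eq_one_of_lt fun _ hξ => hi.trans <| not_le.mp fun hξγ =>
    let ⟨U, hU⟩ := exists_levelChar_ne_one hB hinj hξγ (Finsupp.mem_support_iff.mp hξ)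
    hU (hg U)

end LevelCharacters

theorem Cardinal.IsRegular.exists_forall_lt {c : Cardinal} (hc : c.IsRegular)
    {S : Set c.ord.ToType} (hS : #S < c) : ∃ γ, ∀ x ∈ S, x < γ :=
  not_isCofinal_iff.mp fun hS' =>
    (Order.cof_le hS').not_gt (by rwa [Ordinal.cof_toType, hc.cof_ord])

theorem mk_Iic_le_continuum {c : Cardinal} (hc : c ≤ Order.succ 𝔠) (α : c.ord.ToType) :
    #(Iic α) ≤ 𝔠 := by
  have hIio : #(Iio α) ≤ 𝔠 :=
    Order.lt_succ_iff.mp ((by simpa using mk_Iio_lt α : #(Iio α) < c).trans_le hc)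
  calc #(Iic α) = #(insert α (Iio α) : Set _) := by rw [Iio_insert]
    _ ≤ #(Iio α) + 1 := mk_insert_le
    _ ≤ 𝔠 + 1 := add_le_add_left hIio 1
    _ = 𝔠 := add_one_eq aleph0_le_continuum

theorem exists_injOn_real_of_mk_le_continuum {X : Type u} {s : Set X} (hs : #s ≤ 𝔠) :
    ∃ f : X → ℝ, InjOn f s := by
  classical
  obtain ⟨e⟩ : Nonempty (s ↪ ℝ) := lift_mk_le'.mp (by simpa [mk_real] using hs)
  refine ⟨fun x => if hx : x ∈ s then e ⟨x, hx⟩ else 0, fun x hx y hy hxy => ?_⟩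
  have : e ⟨x, hx⟩ = e ⟨y, hy⟩ := by simpa [hx, hy] using hxy
  simpa using e.injective this

theorem exists_precompact_isPseudoTauFine_lt_not_isPseudoTauFine {T : Type u} [LinearOrder T]
    {τ : Cardinal.{u}} (hτ : ℵ₀ < τ) (hT : #T ≤ τ)
    (hbound : ∀ S : Set T, #S < τ → ∃ γ, ∀ x ∈ S, x < γ)
    {h : T → T → ℝ} (hinj : ∀ α, InjOn (h α) (Iic α)) :
    ∃ (G : Type u) (_ : TopologicalSpace G) (_ : CommGroup G) (_ : IsTopologicalGroup G)
      (_ : T2Space G), PrecompactGroup G ∧ ℵ₀ < psi G ∧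
        (∀ κ < τ, IsPseudoTauFine κ G) ∧ ¬ IsPseudoTauFine τ G := by
  let B := TopologicalSpace.countableBasis ℝ
  have hB : TopologicalSpace.IsTopologicalBasis B := TopologicalSpace.isBasis_countableBasis ℝ
  have : Countable B := (TopologicalSpace.countable_countableBasis ℝ).to_subtype
  let _ : TopologicalSpace (Multiplicative (ZMod 2)) := ⊥
  have : DiscreteTopology (Multiplicative (ZMod 2)) := ⟨rfl⟩
  let χ : T × B → Multiplicative (T →₀ ZMod 2) →* Multiplicative (ZMod 2) := levelChar h
  let _ : TopologicalSpace (Multiplicative (T →₀ ZMod 2)) := .induced (MonoidHom.pi χ) inferInstance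
  have hχ : IsInducing (MonoidHom.pi χ) := ⟨rfl⟩
  have hsmall (t : Set (T × B)) (ht : #t < τ) : ∃ γ, ∀ i ∈ t, i.1 < γ :=
    (hbound _ (mk_image_le.trans_lt ht)).imp fun _ hγ i hi => hγ _ (mem_image_of_mem _ hi)
  have hsep (g) (hg : g ≠ 1) : ∃ i, χ i g ≠ 1 := exists_levelChar_ne_one_of_ne_one hB hinj hg
  have hcount (t : Set (T × B)) (ht : t.Countable) : ∃ g ≠ 1, ∀ i ∈ t, χ i g = 1 :=
    have ⟨_, hγ⟩ := hsmall t (ht.le_aleph0.trans_lt hτ)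
    exists_ne_one_forall_levelChar_eq_one hγ
  have hfine (κ) (hκ : ℵ₀ ≤ κ) (hκτ : κ < τ) :
      IsPseudoTauFine κ (Multiplicative (T →₀ ZMod 2)) :=
    MonoidHom.isPseudoTauFine_of_forall_exists_countable hχ hκ fun s hs =>
      have ⟨γ, hγ⟩ := hsmall s (hs.trans_lt hκτ)
      ⟨{γ} ×ˢ Set.univ, (countable_singleton γ).prod countable_univ, fun _ hg i hi =>
        levelChar_eq_one_of_forall_levelChar_eq_one hB (hinj γ) (hγ i hi)
          fun U => hg (γ, U) ⟨rfl, trivial⟩⟩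
  have hcard : #(T × B) ≤ τ := by
    rw [mk_prod, lift_uzero, ← mul_aleph0_eq hτ.le]
    exact mul_le_mul' hT (lift_le_aleph0.mpr mk_le_aleph0)
  have : T2Space (Multiplicative (T →₀ ZMod 2)) := MonoidHom.t2Space_of_isInducing hχ hsep
  exact ⟨_, _, _, hχ.topologicalGroup _, this, MonoidHom.precompactGroup_of_isInducing hχ,
    aleph0_lt_psiAt_of_not_isGδ (MonoidHom.not_isGδ_singleton_one hχ hcount),
    fun κ hκ => (hfine _ (le_max_right _ _) (max_lt hκ hτ)).mono (le_max_left _ _),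
    MonoidHom.not_isPseudoTauFine_of_forall_countable hχ hcard hsep hcount⟩

theorem statement_6 (τ : Cardinal.{u}) (h1 : ℵ₀ < τ) (h2 : τ.IsRegular)
    (h3 : τ ≤ Order.succ Cardinal.continuum) :
    ∃ (G : Type u) (_ : TopologicalSpace G) (_ : CommGroup G) (_ : IsTopologicalGroup G)
      (_ : T2Space G), PrecompactGroup G ∧ ℵ₀ < psi G ∧
        (∀ lam : Cardinal.{u}, ℵ₀ ≤ lam → lam < τ → IsPseudoTauFine lam G) ∧
        ¬ IsPseudoTauFine τ G ∧ pfi G = τ := by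
  choose h hinj using fun α => exists_injOn_real_of_mk_le_continuum (mk_Iic_le_continuum h3 α)
  obtain ⟨G, tG, gG, hG, t2G, hpre, hpsi, hfine, hnot⟩ :=
    exists_precompact_isPseudoTauFine_lt_not_isPseudoTauFine h1 (mk_ord_toType τ).le
      (fun _ => h2.exists_forall_lt) hinj
  exact ⟨G, tG, gG, hG, t2G, hpre, hpsi, fun κ _ hκ => hfine κ hκ, hnot,
    pfi_eq_of_isPseudoTauFine hfine hnot⟩
end

section
/- Let τ be an uncountable regular cardinal with τ ≤ 𝔠⁺, let X be a set of cardinality τ, let F(X) be the free abelian group on X, and for each subset Y ⊆ X with |Y| < τ fix a homomorphism f_Y : F(X) → 𝕋 with kernel exactly F(X\Y) (the subgroup generated by X\Y). Endow G = F(X) with the coarsest group topology making all the f_Y continuous. Then for every subset A of the dual group G* (the group of continuous homomorphisms G → 𝕋) with |A| < τ, there exists Y ⊆ X with |Y| < τ such that F(X\Y) ⊆ ⋂_{a∈A} ker a. -/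
open Cardinal Topology Pointwise

universe u

/-!
A continuous character `a` pulls a ball of radius `1/4` around `0 ∈ 𝕋` back to a neighbourhood
of `0`; in the initial topology of the `f_Y` such a neighbourhood contains the subgroup
`⋂_{i ≤ n} ker f_{Y_i} ⊇ F(X \ ⋃ Y_i)` for finitely many `Y_i`. Since `𝕋` has no small subgroups,
`a` vanishes on that subgroup. Regularity of `τ` keeps the union of these finitely many `Y_i`,
and then the union over the `< τ` characters in `A`, of size `< τ`.
-/

namespace AddCircle

variable {p : ℝ}

theorem norm_two_nsmul_of_norm_le (hp : p ≠ 0) {x : AddCircle p} (hx : ‖x‖ ≤ |p| / 4) :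
    ‖2 • x‖ = 2 * ‖x‖ := by
  obtain ⟨r, rfl⟩ := QuotientAddGroup.mk_surjective x
  set s := r - round (p⁻¹ * r) * p
  have hs : (s : AddCircle p) = r := by
    rw [coe_sub, sub_eq_self, ← zsmul_eq_mul, coe_zsmul, coe_period, smul_zero]
  have hnorm : ‖(r : AddCircle p)‖ = |s| := norm_eq p
  have h2s : |2 * s| = 2 * |s| := by rw [abs_mul, abs_two]
  rw [← hs, ← coe_nsmul, nsmul_eq_mul, Nat.cast_ofNat,
    (norm_coe_eq_abs_iff p hp).mpr (by rw [h2s]; linarith), hs, hnorm, h2s]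

theorem addSubgroup_eq_bot_of_norm_lt (hp : p ≠ 0) (H : AddSubgroup (AddCircle p))
    (hH : ∀ x ∈ H, ‖x‖ < |p| / 4) : H = ⊥ := by
  refine (AddSubgroup.eq_bot_iff_forall H).mpr fun x hx => norm_eq_zero.mp ?_
  have hpow : ∀ k : ℕ, ‖(2 ^ k) • x‖ = 2 ^ k * ‖x‖ := by
    intro k
    induction k with
    | zero => simp
    | succ k ih =>
      rw [pow_succ, mul_nsmul, norm_two_nsmul_of_norm_le hp (hH _ (H.nsmul_mem hx _)).le, ih]
      ring
  by_contra hne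
  obtain ⟨k, hk⟩ := pow_unbounded_of_one_lt (|p| / 4 / ‖x‖) one_lt_two
  have := hH _ (H.nsmul_mem hx (2 ^ k))
  rw [hpow] at this
  rw [div_lt_iff₀ ((norm_nonneg x).lt_of_ne' hne)] at hk
  linarith

end AddCircle

theorem exists_finset_of_mem_nhds_zero_iInf_induced
    {ι G H : Type*} [AddGroup G] [AddGroup H] [TopologicalSpace H] (f : ι → G →+ H) {U : Set G}
    (hU : U ∈ @nhds G (⨅ i, TopologicalSpace.induced (f i) inferInstance) 0) :
    ∃ I : Finset ι, ∀ x, (∀ i ∈ I, f i x = 0) → x ∈ U := by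
  simp only [nhds_iInf, nhds_induced, map_zero] at hU
  obtain ⟨I, hI, V, hV, -, rfl, -⟩ := Filter.mem_iInf'.mp hU
  refine ⟨hI.toFinset, fun x hx => Set.mem_iInter₂.mpr fun i hi => ?_⟩
  obtain ⟨W, hW, hWV⟩ := hV i
  exact hWV (show f i x ∈ W from (hx i (hI.mem_toFinset.mpr hi)).symm ▸ mem_of_mem_nhds hW)

theorem exists_finset_iInf_ker_le_ker_of_continuous {ι G : Type*} [AddGroup G] {p : ℝ}
    (hp : p ≠ 0) (f : ι → G →+ AddCircle p) (a : G →+ AddCircle p)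
    (ha : Continuous[⨅ i, TopologicalSpace.induced (f i) inferInstance, inferInstance] a) :
    ∃ I : Finset ι, ⨅ i ∈ I, (f i).ker ≤ a.ker := by
  let _ : TopologicalSpace G := ⨅ i, TopologicalSpace.induced (f i) inferInstance
  have hball : a ⁻¹' Metric.ball 0 (|p| / 4) ∈ 𝓝 0 :=
    ha.continuousAt.preimage_mem_nhds
      (by simpa using Metric.ball_mem_nhds (0 : AddCircle p) (div_pos (abs_pos.mpr hp) four_pos))
  obtain ⟨I, hI⟩ := exists_finset_of_mem_nhds_zero_iInf_induced f hball
  refine ⟨I, (AddSubgroup.map_eq_bot_iff _).mp <|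
    AddCircle.addSubgroup_eq_bot_of_norm_lt hp _ ?_⟩
  rintro _ ⟨x, hx, rfl⟩
  simp only [SetLike.mem_coe, AddSubgroup.mem_iInf, AddMonoidHom.mem_ker] at hx
  exact mem_ball_zero_iff.mp (hI x hx)

theorem FreeAbelianGroup.antitone_closure_of_image_compl {X : Type*} :
    Antitone fun Y : Set X => AddSubgroup.closure (FreeAbelianGroup.of '' Yᶜ) :=
  fun _ _ h => AddSubgroup.closure_mono (Set.image_mono (Set.compl_subset_compl.mpr h))

theorem exists_card_lt_closure_of_image_compl_le_ker {X : Type u} {τ : Cardinal.{u}}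
    (hreg : τ.IsRegular) {p : ℝ} (hp : p ≠ 0) (f : Set X → (FreeAbelianGroup X →+ AddCircle p))
    (hker : ∀ Y : Set X, #Y < τ →
      (f Y).ker = AddSubgroup.closure (FreeAbelianGroup.of '' Yᶜ))
    (a : FreeAbelianGroup X →+ AddCircle p)
    (ha : Continuous[⨅ (Y : Set X) (_ : #Y < τ), TopologicalSpace.induced (f Y) inferInstance,
      inferInstance] a) :
    ∃ Y : Set X, #Y < τ ∧ AddSubgroup.closure (FreeAbelianGroup.of '' Yᶜ) ≤ a.ker := by
  rw [iInf_subtype'] at ha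
  obtain ⟨I, hI⟩ := exists_finset_iInf_ker_le_ker_of_continuous hp
    (fun Y : {Y : Set X // #Y < τ} => f Y.1) a ha
  have hIcard : #I < τ := (lt_aleph0_of_finite I).trans_le hreg.aleph0_le
  refine ⟨⋃ Y : I, Y.1.1, (card_iUnion_lt_iff_forall_of_isRegular hreg hIcard).mpr
    fun Y => Y.1.2, le_trans (le_iInf₂ fun Y hY => ?_) hI⟩
  rw [hker Y.1 Y.2]
  exact FreeAbelianGroup.antitone_closure_of_image_compl
    (Set.subset_iUnion (fun Y : I => Y.1.1) ⟨Y, hY⟩)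

theorem statement_7_general (τ : Cardinal.{u}) (hreg : τ.IsRegular) (X : Type u)
    (f : Set X → (FreeAbelianGroup X →+ AddCircle (1 : ℝ)))
    (hker : ∀ Y : Set X, #Y < τ →
      (f Y).ker = AddSubgroup.closure (FreeAbelianGroup.of '' Yᶜ))
    (A : Set (FreeAbelianGroup X →+ AddCircle (1 : ℝ)))
    (hA : ∀ a ∈ A, @Continuous _ _
      (⨅ (Y : Set X) (_ : #Y < τ), TopologicalSpace.induced (f Y) inferInstance)
      inferInstance ⇑a)
    (hAcard : #A < τ) :
    ∃ Y : Set X, #Y < τ ∧ ∀ a ∈ A,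
      AddSubgroup.closure (FreeAbelianGroup.of '' Yᶜ) ≤ a.ker := by
  choose Y hYcard hYker using fun a : A =>
    exists_card_lt_closure_of_image_compl_le_ker hreg one_ne_zero f hker a (hA a a.2)
  refine ⟨⋃ a, Y a, (card_iUnion_lt_iff_forall_of_isRegular hreg hAcard).mpr hYcard,
    fun a ha => ?_⟩
  exact (FreeAbelianGroup.antitone_closure_of_image_compl
    (Set.subset_iUnion Y ⟨a, ha⟩)).trans (hYker ⟨a, ha⟩)

theorem statement_7 (τ : Cardinal.{u}) (hreg : τ.IsRegular) (hτ : ℵ₀ < τ)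
    (hle : τ ≤ Order.succ Cardinal.continuum) (X : Type u) (hX : #X = τ)
    (f : Set X → (FreeAbelianGroup X →+ AddCircle (1 : ℝ)))
    (hker : ∀ Y : Set X, #Y < τ →
      (f Y).ker = AddSubgroup.closure (FreeAbelianGroup.of '' Yᶜ))
    (A : Set (FreeAbelianGroup X →+ AddCircle (1 : ℝ)))
    (hA : ∀ a ∈ A, @Continuous _ _
      (⨅ (Y : Set X) (_ : #Y < τ), TopologicalSpace.induced (f Y) inferInstance)
      inferInstance ⇑a)
    (hAcard : #A < τ) :
    ∃ Y : Set X, #Y < τ ∧ ∀ a ∈ A,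
      AddSubgroup.closure (FreeAbelianGroup.of '' Yᶜ) ≤ a.ker :=
  statement_7_general τ hreg X f hker A hA hAcard
end

section
/- There exists a precompact abelian (Hausdorff) topological group G with uncountable pseudocharacter that is pseudo-𝔠-fine. -/
open Cardinal Topology Pointwise

universe u

/-!
Let `I` be the well-order of type `𝔠⁺`. Since `𝔽₂^ℕ` has dimension `𝔠` and every initial
segment `Iio i` has at most `𝔠` elements, there are injective linear maps
`bᵢ : 𝔽₂^(Iio i) → 𝔽₂^ℕ`. Give `G = 𝔽₂^(⊕ I)` the initial topology of the characters
`x ↦ bᵢ (x|Iio i) n`; it is precompact, since the joint kernels of finitely many of these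
characters have finite index and form a base at `1`.
The joint kernel of the countably many characters of block `i` is the subgroup `Nᵢ` of elements
vanishing below `i`. So the `Nᵢ` are decreasing `G_δ` subgroups, every neighbourhood of `1`
contains one of them, and each is nontrivial. As `cf 𝔠⁺ > 𝔠`, any `𝔠` neighbourhoods of `1`
contain a common `N_z`, which is a countable intersection of neighbourhoods: `G` is
pseudo-`𝔠`-fine. Any countably many contain a common nontrivial `N_z`: `ψ(G) > ℵ₀`.
-/

universe v

open Function Set

theorem bddAbove_range_of_mk_lt_cof {ι I : Type u} [LinearOrder I] (f : ι → I)
    (h : #ι < Order.cof I) : BddAbove (range f) :=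
  BddAbove.of_not_isCofinal fun hf => ((Order.cof_le hf).trans mk_range_le).not_gt h

theorem cof_succ_ord_toType {κ : Cardinal.{u}} (hκ : ℵ₀ ≤ κ) :
    Order.cof (Order.succ κ).ord.ToType = Order.succ κ := by
  rw [Ordinal.cof_toType, (isRegular_succ hκ).cof_ord]

theorem mk_Iio_succ_ord_toType_le {κ : Cardinal.{u}} (i : (Order.succ κ).ord.ToType) :
    #(Iio i) ≤ κ :=
  Order.lt_succ_iff.mp (by simpa using mk_Iio_lt i)

theorem continuum_le_rank_fun_nat (K : Type v) [Field K] : 𝔠 ≤ Module.rank K (ℕ → K) := by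
  rw [rank_fun_infinite, mk_arrow, lift_uzero, mk_nat, lift_aleph0, ← two_power_aleph0]
  exact power_le_power_right (two_le_iff.mpr ⟨0, 1, zero_ne_one⟩)

theorem exists_injective_linearMap_finsupp_fun_nat (K : Type v) [Field K] {ι : Type u}
    (hι : #ι ≤ 𝔠) : ∃ f : (ι →₀ K) →ₗ[K] ℕ → K, Injective f := by
  obtain ⟨s, hs, hli⟩ := le_rank_iff_exists_linearIndependent.mp (continuum_le_rank_fun_nat K)
  obtain ⟨e⟩ : Nonempty (ι ↪ s) := lift_mk_le'.mp (by simpa [hs] using hι)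
  exact ⟨Finsupp.linearCombination K (Subtype.val ∘ e), hli.comp e e.injective⟩

section PrecompactGroup

variable {G : Type u} [Group G] [TopologicalSpace G]

theorem precompactGroup_of_forall_exists_finiteIndex
    (h : ∀ U ∈ 𝓝 (1 : G), ∃ H : Subgroup G, H.FiniteIndex ∧ (H : Set G) ⊆ U) :
    PrecompactGroup G := by
  intro U hU
  obtain ⟨H, _, hHU⟩ := h U hU
  refine ⟨(finite_range fun q : G ⧸ H => q.out).toFinset, fun g _ => ?_⟩
  obtain ⟨k, hk⟩ := QuotientGroup.mk_out_eq_mul H g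
  refine mem_iUnion₂.mpr ⟨_, (Finite.mem_toFinset _).mpr (mem_range_self (g : G ⧸ H)),
    ⟨k⁻¹, hHU (H.inv_mem k.2), ?_⟩⟩
  simp [hk]

variable {T D : Type*} [Group D] [TopologicalSpace D] [DiscreteTopology D] {φ : G →* (T → D)}

theorem Topology.IsInducing.exists_finset_subset_of_mem_nhds_one (hφ : IsInducing φ)
    {U : Set G} (hU : U ∈ 𝓝 (1 : G)) : ∃ F : Finset T, {x | ∀ t ∈ F, φ x t = 1} ⊆ U := by
  rw [hφ.nhds_eq_comap, nhds_pi, nhds_discrete, ((Filter.hasBasis_pi_pure _).comap φ).mem_iff]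
    at hU
  obtain ⟨F, hF, hFU⟩ := hU
  exact ⟨hF.toFinset, fun x hx => hFU fun t ht => by simpa using hx t (hF.mem_toFinset.mpr ht)⟩

theorem precompactGroup_of_isInducing_pi [Finite D] (hφ : IsInducing φ) : PrecompactGroup G := by
  refine precompactGroup_of_forall_exists_finiteIndex fun U hU => ?_
  obtain ⟨F, hFU⟩ := hφ.exists_finset_subset_of_mem_nhds_one hU
  let q : G →* (F → D) := MonoidHom.pi fun t => (Pi.evalMonoidHom _ t.1).comp φ
  refine ⟨q.ker, Subgroup.finiteIndex_ker q, fun x hx => hFU fun t ht => ?_⟩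
  exact congrFun (q.mem_ker.mp hx) ⟨t, ht⟩

end PrecompactGroup

theorem aleph0_lt_psiAt {X : Type u} [TopologicalSpace X] [T1Space X] {x : X}
    (h : ∀ S : Set (Set X), S.Countable → (∀ U ∈ S, U ∈ 𝓝 x) → ∃ y ≠ x, y ∈ ⋂₀ S) :
    ℵ₀ < psiAt X x := by
  have hne : {c | ∃ S : Set (Set X), (∀ U ∈ S, IsOpen U ∧ x ∈ U) ∧ ⋂₀ S = {x} ∧ #S = c}.Nonempty :=
    ⟨_, {U | IsOpen U ∧ x ∈ U}, fun _ => id, by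
      rw [← nhdsKer_eq_of_t1Space {x}, nhdsKer_def]; simp, rfl⟩
  obtain ⟨S, hSopen, hSx, hS⟩ := csInf_mem hne
  refine lt_of_not_ge fun hle => ?_
  obtain ⟨y, hyx, hy⟩ := h S (mk_le_aleph0_iff.mp (hS.trans_le hle)) fun U hU =>
    (hSopen U hU).1.mem_nhds (hSopen U hU).2
  exact hyx (by simpa [hSx] using hy)

section Chain

variable {G : Type u} [Group G] [TopologicalSpace G] {I : Type u} [LinearOrder I] {N : I → Set G}

theorem isPseudoTauFine_of_antitone {τ : Cardinal.{u}} (hτ : τ < Order.cof I) (hN : Antitone N)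
    (hnhds : ∀ U ∈ 𝓝 (1 : G), ∃ i, N i ⊆ U)
    (hGδ : ∀ i, ∃ V : ℕ → Set G, (∀ n, V n ∈ 𝓝 1) ∧ ⋂ n, V n ⊆ N i) :
    IsPseudoTauFine τ G := by
  intro ι U hι hU
  choose i hi using fun α => hnhds (U α) (hU α)
  obtain ⟨z, hz⟩ := bddAbove_range_of_mk_lt_cof i (hι.trans_lt hτ)
  obtain ⟨V, hV, hVN⟩ := hGδ z
  exact ⟨V, hV, hVN.trans (subset_iInter fun α => (hN (hz (mem_range_self α))).trans (hi α))⟩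

theorem aleph0_lt_psi_of_antitone [T1Space G] (hcof : ℵ₀ < Order.cof I) (hN : Antitone N)
    (hnhds : ∀ U ∈ 𝓝 (1 : G), ∃ i, N i ⊆ U) (hne : ∀ i, ∃ x ∈ N i, x ≠ 1) : ℵ₀ < psi G := by
  refine aleph0_lt_psiAt fun S hS hSnhds => ?_
  choose i hi using fun U : S => hnhds U (hSnhds U U.2)
  obtain ⟨z, hz⟩ := bddAbove_range_of_mk_lt_cof i (hS.le_aleph0.trans_lt hcof)
  obtain ⟨x, hx, hx1⟩ := hne z
  exact ⟨x, hx1, fun U hU => hi ⟨U, hU⟩ (hN (hz (mem_range_self _)) hx)⟩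

end Chain

section BlockGroup

variable {I : Type u} [LinearOrder I] {K : Type} [Ring K] (b : ∀ i : I, (Iio i →₀ K) →ₗ[K] ℕ → K)

noncomputable def blockMap (i : I) : (I →₀ K) →ₗ[K] ℕ → K := b i ∘ₗ Finsupp.lsubtypeDomain (Iio i)

theorem blockMap_eq_zero_iff {i : I} (hb : Injective (b i)) {x : I →₀ K} :
    blockMap b i x = 0 ↔ ∀ j < i, x j = 0 := by
  rw [blockMap, LinearMap.comp_apply, ← map_zero (b i), hb.eq_iff, Finsupp.ext_iff]
  simp [Finsupp.lsubtypeDomain_apply]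

noncomputable def blockHom : Multiplicative (I →₀ K) →* (I × ℕ → Multiplicative K) :=
  MonoidHom.pi fun p => (LinearMap.proj p.2 ∘ₗ blockMap b p.1).toAddMonoidHom.toMultiplicative

theorem blockHom_apply (x : Multiplicative (I →₀ K)) (p : I × ℕ) :
    blockHom b x p = .ofAdd (blockMap b p.1 x.toAdd p.2) :=
  rfl

theorem blockHom_injective [NoMaxOrder I] (hb : ∀ i, Injective (b i)) : Injective (blockHom b) := by
  refine (injective_iff_map_eq_one _).mpr fun x hx => toAdd_eq_zero.mp (Finsupp.ext fun j => ?_)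
  obtain ⟨i, hji⟩ := exists_gt j
  have hblock : blockMap b i x.toAdd = 0 := funext fun n => by
    simpa [blockHom_apply] using congrFun hx (i, n)
  exact (blockMap_eq_zero_iff b (hb i)).mp hblock j hji

def vanishBelow (z : I) : Set (Multiplicative (I →₀ K)) := {x | ∀ j < z, x.toAdd j = 0}

theorem vanishBelow_antitone : Antitone (vanishBelow : I → Set (Multiplicative (I →₀ K))) :=
  fun _ _ hij _ hx j hj => hx j (hj.trans_le hij)

theorem exists_ne_one_mem_vanishBelow [Nontrivial K] (z : I) :
    ∃ x ∈ (vanishBelow z : Set (Multiplicative (I →₀ K))), x ≠ 1 := by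
  refine ⟨.ofAdd (Finsupp.single z 1), fun j hj => Finsupp.single_eq_of_ne hj.ne, ?_⟩
  simp [← ofAdd_zero]

theorem mem_vanishBelow_iff {i : I} (hb : Injective (b i)) {x : Multiplicative (I →₀ K)} :
    x ∈ vanishBelow i ↔ ∀ n, blockHom b x (i, n) = 1 := by
  rw [show x ∈ vanishBelow i ↔ _ from (blockMap_eq_zero_iff b hb).symm, funext_iff]
  simp [blockHom_apply]

variable [TopologicalSpace K] [DiscreteTopology K] [TopologicalSpace (Multiplicative (I →₀ K))] {b}

theorem exists_vanishBelow_subset [Nonempty I] (hb : ∀ i, Injective (b i))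
    (hφ : IsInducing (blockHom b)) {U : Set (Multiplicative (I →₀ K))} (hU : U ∈ 𝓝 1) :
    ∃ z, vanishBelow z ⊆ U := by
  obtain ⟨F, hFU⟩ := hφ.exists_finset_subset_of_mem_nhds_one hU
  obtain ⟨z, hz⟩ := (F.image Prod.fst).exists_le
  refine ⟨z, fun x hx => hFU fun p hp => ?_⟩
  have hpz : p.1 ≤ z := hz p.1 (Finset.mem_image_of_mem _ hp)
  exact (mem_vanishBelow_iff b (hb p.1)).mp (vanishBelow_antitone hpz hx) p.2

theorem exists_iInter_nhds_subset_vanishBelow (hb : ∀ i, Injective (b i))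
    (hφ : IsInducing (blockHom b)) (z : I) :
    ∃ V : ℕ → Set (Multiplicative (I →₀ K)), (∀ n, V n ∈ 𝓝 1) ∧ ⋂ n, V n ⊆ vanishBelow z := by
  refine ⟨fun n => {x | blockHom b x (z, n) = 1}, fun n => ?_, fun x hx => ?_⟩
  · have hcont : Continuous fun x => blockHom b x (z, n) :=
      (continuous_apply (z, n)).comp hφ.continuous
    show (fun x => blockHom b x (z, n)) ⁻¹' {1} ∈ 𝓝 1
    exact hcont.continuousAt.preimage_mem_nhds (by simp)
  · exact (mem_vanishBelow_iff b (hb z)).mpr fun n => Set.mem_iInter.mp hx n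

end BlockGroup

theorem statement_8 :
    ∃ (G : Type u) (_ : TopologicalSpace G) (_ : CommGroup G) (_ : IsTopologicalGroup G)
      (_ : T2Space G), PrecompactGroup G ∧ ℵ₀ < psi G ∧
        IsPseudoTauFine Cardinal.continuum G := by
  let I := (Order.succ 𝔠).ord.ToType
  have hcof : Order.cof I = Order.succ 𝔠 := cof_succ_ord_toType aleph0_le_continuum
  have : Nonempty I := nonempty_ord_toType (succ_ne_zero 𝔠)
  have : NoMaxOrder I := Cardinal.noMaxOrder (aleph0_le_continuum.trans (Order.le_succ _))
  choose b hb using fun i : I =>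
    exists_injective_linearMap_finsupp_fun_nat (ZMod 2) (mk_Iio_succ_ord_toType_le i)
  let G := Multiplicative (I →₀ ZMod 2)
  let : TopologicalSpace G := .induced (blockHom b) inferInstance
  have hφ : IsInducing (blockHom b) := ⟨rfl⟩
  have := topologicalGroup_induced (blockHom b)
  have : T2Space G := (IsEmbedding.mk hφ (blockHom_injective b hb)).t2Space
  refine ⟨G, _, _, inferInstance, inferInstance, precompactGroup_of_isInducing_pi hφ,
    aleph0_lt_psi_of_antitone ?_ vanishBelow_antitone (fun _ => exists_vanishBelow_subset hb hφ)
      exists_ne_one_mem_vanishBelow,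
    isPseudoTauFine_of_antitone ?_ vanishBelow_antitone (fun _ => exists_vanishBelow_subset hb hφ)
      (exists_iInter_nhds_subset_vanishBelow hb hφ)⟩
  · rw [hcof]; exact aleph0_lt_continuum.trans (Order.lt_succ _)
  · rw [hcof]; exact Order.lt_succ _
end

section
/- Let G be a compact connected topological group of weight τ with infinite co-Lie character. Then cL(G) ≤ τ, i.e., cL(G) ≤ w(G). -/
open Cardinal Topology Pointwise

universe u

/-!
A Lie group has no small subgroups: in a chart at `1`, right multiplication by an element `h`
close to `1` moves every point close to `1` by nearly the same vector `v`, so the powers of `h`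
drift away linearly unless `v = 0`. Hence a co-Lie subgroup `N` is the largest subgroup of `G`
contained in a suitable neighbourhood of `N`, and since `N` is compact this neighbourhood can be
taken to be a finite union of members of a fixed base `B`. This assigns to distinct co-Lie
subgroups distinct finite subsets of `B`, so `cL G ≤ #(Finset B) = #B` as soon as `B` is infinite,
which it must be since `cL G` is.
-/

open Topology Metric Filter
open scoped Manifold

theorem eq_zero_of_forall_iterate_mem_ball {E : Type*} [NormedAddCommGroup E] [NormedSpace ℝ E]
    {f : E → E} {c v : E} {r : ℝ} (hf : ∀ p ∈ ball c r, ‖f p - p - v‖ ≤ ‖v‖ / 2)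
    (horbit : ∀ k : ℕ, f^[k] c ∈ ball c r) : v = 0 := by
  have drift (k : ℕ) : ‖f^[k] c - c - k • v‖ ≤ k * (‖v‖ / 2) := by
    induction k with
    | zero => simp
    | succ k ih =>
      calc ‖f^[k + 1] c - c - (k + 1) • v‖
          = ‖(f (f^[k] c) - f^[k] c - v) + (f^[k] c - c - k • v)‖ := by
            rw [Function.iterate_succ_apply', succ_nsmul]; congr 1; abel
        _ ≤ ‖v‖ / 2 + k * (‖v‖ / 2) := (norm_add_le _ _).trans (add_le_add (hf _ (horbit k)) ih)
        _ = (k + 1 : ℕ) * (‖v‖ / 2) := by push_cast; ring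
  have bounded (k : ℕ) : k * (‖v‖ / 2) < r := by
    have hk : ‖f^[k] c - c‖ < r := by simpa [dist_eq_norm] using horbit k
    have := calc (k : ℝ) * ‖v‖ = ‖k • v‖ := by rw [RCLike.norm_nsmul ℝ, nsmul_eq_mul]
      _ ≤ ‖f^[k] c - c‖ + ‖f^[k] c - c - k • v‖ := by
        simpa using norm_sub_le (f^[k] c - c) (f^[k] c - c - k • v)
    linarith [drift k]
  by_contra hv
  have hv2 : 0 < ‖v‖ / 2 := by positivity
  obtain ⟨k, hk⟩ := exists_nat_gt (r / (‖v‖ / 2))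
  rw [div_lt_iff₀ hv2] at hk
  exact (bounded k).not_gt hk

theorem eventually_norm_sub_sub_le_of_hasStrictFDerivAt {𝕜 E : Type*} [NontriviallyNormedField 𝕜]
    [NormedAddCommGroup E] [NormedSpace 𝕜 E] {μ : E × E → E} {A : E × E →L[𝕜] E} {c : E}
    (hμ : HasStrictFDerivAt μ A (c, c)) (hleft : ∀ᶠ p in 𝓝 c, μ (p, c) = p)
    (hright : ∀ᶠ q in 𝓝 c, μ (c, q) = q) {ε : ℝ} (hε : 0 < ε) :
    ∀ᶠ x in 𝓝 (c, c), ‖μ x - x.1 - (x.2 - c)‖ ≤ ε * ‖x.2 - c‖ := by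
  have hA : A.comp (ContinuousLinearMap.inr 𝕜 E E) = ContinuousLinearMap.id 𝕜 E := by
    refine (hμ.hasFDerivAt.comp c (hasFDerivAt_prodMk_right c c)).unique ?_
    exact (hasFDerivAt_id c).congr_of_eventuallyEq hright
  have hpair : Tendsto (fun x : E × E ↦ (x, (x.1, c))) (𝓝 (c, c)) (𝓝 ((c, c), (c, c))) :=
    tendsto_id.prodMk_nhds ((continuous_fst.prodMk continuous_const).tendsto' _ _ rfl)
  filter_upwards [hpair.eventually (hμ.isLittleO.def hε), continuous_fst.continuousAt.eventually hleft]
    with x hx hxl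
  have hsub : x - (x.1, c) = (0, x.2 - c) := by ext <;> simp
  have hAv : A (0, x.2 - c) = x.2 - c := congr($hA (x.2 - c))
  simpa [hsub, hAv, hxl] using hx

def HasNoSmallSubgroups (G : Type*) [TopologicalSpace G] [Group G] : Prop :=
  ∃ U ∈ 𝓝 (1 : G), ∀ H : Subgroup G, (H : Set G) ⊆ U → H = ⊥

namespace LieGroup

variable {E H G : Type*} [NormedAddCommGroup E] [NormedSpace ℝ E] [TopologicalSpace H]
  [TopologicalSpace G] [ChartedSpace H G] [Group G]

theorem contDiffAt_extChartAt_mul {I : ModelWithCorners ℝ E H} [I.Boundaryless] {n : WithTop ℕ∞}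
    [LieGroup I n G] :
    ContDiffAt ℝ n (fun x : E × E ↦ extChartAt I (1 : G) ((extChartAt I 1).symm x.1 *
      (extChartAt I 1).symm x.2)) (extChartAt I (1 : G) 1, extChartAt I (1 : G) 1) := by
  set e := extChartAt I (1 : G)
  have hsymm : ContMDiffAt 𝓘(ℝ, E) I n e.symm (e 1) :=
    (contMDiffOn_extChartAt_symm 1).contMDiffAt (extChartAt_target_mem_nhds 1)
  have hchart : ContMDiffAt I 𝓘(ℝ, E) n e (e.symm (e 1) * e.symm (e 1)) := by
    rw [e.left_inv (mem_extChartAt_source 1), mul_one]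
    exact contMDiffAt_extChartAt
  exact (hchart.comp (e 1, e 1) ((hsymm.comp (e 1, e 1) contDiffAt_fst.contMDiffAt).mul
    (hsymm.comp (e 1, e 1) contDiffAt_snd.contMDiffAt))).contDiffAt

theorem hasNoSmallSubgroups (I : ModelWithCorners ℝ E H) [I.Boundaryless] {n : WithTop ℕ∞}
    [LieGroup I n G] (hn : n ≠ 0) : HasNoSmallSubgroups G := by
  set e := extChartAt I (1 : G)
  set c := e 1
  have hc : e.symm c = 1 := e.left_inv (mem_extChartAt_source 1)
  have hleft : ∀ᶠ p in 𝓝 c, e (e.symm (p, c).1 * e.symm (p, c).2) = p := by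
    filter_upwards [extChartAt_target_mem_nhds (1 : G)] with p hp
    simp [hc, e.right_inv hp]
  have hright : ∀ᶠ q in 𝓝 c, e (e.symm (c, q).1 * e.symm (c, q).2) = q := by
    filter_upwards [extChartAt_target_mem_nhds (1 : G)] with q hq
    simp [hc, e.right_inv hq]
  have hest := eventually_norm_sub_sub_le_of_hasStrictFDerivAt
    (contDiffAt_extChartAt_mul.hasStrictFDerivAt hn) hleft hright one_half_pos
  obtain ⟨r, hr, hball⟩ := eventually_nhds_iff_ball.mp hest
  have hmul (p : E) (hp : p ∈ ball c r) (q : E) (hq : q ∈ ball c r) :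
      ‖e (e.symm p * e.symm q) - p - (q - c)‖ ≤ 1 / 2 * ‖q - c‖ :=
    hball (p, q) (by rw [← ball_prod_same]; exact ⟨hp, hq⟩)
  refine ⟨e.source ∩ e ⁻¹' ball c r, inter_mem (extChartAt_source_mem_nhds 1)
    ((continuousAt_extChartAt 1).preimage_mem_nhds (ball_mem_nhds c hr)), fun K hK ↦ ?_⟩
  refine (Subgroup.eq_bot_iff_forall K).2 fun h hh ↦ ?_
  have hpow (k : ℕ) : h ^ k ∈ e.source ∩ e ⁻¹' ball c r := hK (pow_mem hh k)
  have horbit (k : ℕ) : (fun p ↦ e (e.symm p * h))^[k] c = e (h ^ k) := by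
    induction k with
    | zero => rw [pow_zero]; rfl
    | succ k ih => rw [Function.iterate_succ_apply', ih, e.left_inv (hpow k).1, pow_succ]
  have hdrift : e h - c = 0 := by
    refine eq_zero_of_forall_iterate_mem_ball (f := fun p ↦ e (e.symm p * h)) (r := r)
      (fun p hp ↦ ?_) fun k ↦ by rw [horbit k]; exact (hpow k).2
    simpa [e.left_inv (hK hh).1, div_eq_inv_mul] using hmul p hp (e h) (hK hh).2
  exact e.injOn (hK hh).1 (mem_extChartAt_source 1) (by simpa [sub_eq_zero] using hdrift)

end LieGroup

theorem IsLieGroupTop.hasNoSmallSubgroups {L : Type u} [TopologicalSpace L] [Group L]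
    (h : IsLieGroupTop L) : HasNoSmallSubgroups L := by
  obtain ⟨n, _, _⟩ := h
  exact LieGroup.hasNoSmallSubgroups 𝓘(ℝ, EuclideanSpace ℝ (Fin n)) (n := (⊤ : ℕ∞)) (by simp)

theorem HasNoSmallSubgroups.exists_mem_nhdsSet_forall_le {G : Type*} [TopologicalSpace G]
    [Group G] {N : Subgroup G} [N.Normal] (h : HasNoSmallSubgroups (G ⧸ N)) :
    ∃ V ∈ 𝓝ˢ (N : Set G), ∀ M : Subgroup G, (M : Set G) ⊆ V → M ≤ N := by
  obtain ⟨U, hU, hsmall⟩ := h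
  refine ⟨QuotientGroup.mk ⁻¹' U, mem_nhdsSet_iff_forall.2 fun x hx ↦ ?_, fun M hM ↦ ?_⟩
  · have hx1 : (x : G ⧸ N) = 1 := (QuotientGroup.eq_one_iff x).2 hx
    exact QuotientGroup.continuous_mk.continuousAt.preimage_mem_nhds (hx1 ▸ hU)
  · have hbot : M.map (QuotientGroup.mk' N) = ⊥ := by
      refine hsmall _ ?_
      rintro _ ⟨x, hx, rfl⟩
      exact hM hx
    simpa using (Subgroup.map_eq_bot_iff M).1 hbot

theorem TopologicalSpace.IsTopologicalBasis.exists_finset_cover_subset {X : Type*}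
    [TopologicalSpace X] {B : Set (Set X)} (hB : IsTopologicalBasis B) {K V : Set X}
    (hK : IsCompact K) (hV : V ∈ 𝓝ˢ K) :
    ∃ t : Finset B, K ⊆ ⋃ b ∈ t, (b : Set X) ∧ ⋃ b ∈ t, (b : Set X) ⊆ V := by
  obtain ⟨s, hsV, hsfin, hKs⟩ := hK.elim_finite_subcover_image (b := {b : B | (b : Set X) ⊆ V})
    (c := Subtype.val) (fun b _ ↦ hB.isOpen b.2) fun x hx ↦ by
      obtain ⟨b, hbB, hxb, hbV⟩ := hB.mem_nhds_iff.1 (mem_nhdsSet_iff_forall.1 hV x hx)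
      exact Set.mem_iUnion₂.2 ⟨⟨b, hbB⟩, hbV, hxb⟩
  refine ⟨hsfin.toFinset, by simpa using hKs, ?_⟩
  simpa using fun b _ hbs ↦ hsV hbs

theorem exists_finset_basis_forall_subset_iff_le {G : Type u} [TopologicalSpace G] [Group G]
    [CompactSpace G] {B : Set (Set G)} (hB : TopologicalSpace.IsTopologicalBasis B)
    {N : Subgroup G} (hN : N ∈ coLieSubgroups G) :
    ∃ t : Finset B, ∀ M : Subgroup G, (M : Set G) ⊆ ⋃ b ∈ t, (b : Set G) ↔ M ≤ N := by
  obtain ⟨hclosed, _, hlie⟩ := hN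
  obtain ⟨V, hV, hsmall⟩ := hlie.hasNoSmallSubgroups.exists_mem_nhdsSet_forall_le
  obtain ⟨t, hNt, htV⟩ := hB.exists_finset_cover_subset hclosed.isCompact hV
  exact ⟨t, fun M ↦ ⟨fun hM ↦ hsmall M (hM.trans htV), fun hMN ↦ (SetLike.coe_mono hMN).trans hNt⟩⟩

theorem cL_le_mk_finset {G : Type u} [TopologicalSpace G] [Group G] [CompactSpace G]
    {B : Set (Set G)} (hB : TopologicalSpace.IsTopologicalBasis B) : cL G ≤ #(Finset B) := by
  choose t ht using fun N : coLieSubgroups G ↦ exists_finset_basis_forall_subset_iff_le hB N.2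
  refine mk_le_of_injective (f := t) fun N N' hNN' ↦ Subtype.ext (le_antisymm ?_ ?_)
  · exact (ht N' N).1 (hNN' ▸ (ht N N).2 le_rfl)
  · exact (ht N N').1 (hNN' ▸ (ht N' N').2 le_rfl)

theorem exists_isTopologicalBasis_mk_eq_wt (X : Type u) [TopologicalSpace X] :
    ∃ B : Set (Set X), TopologicalSpace.IsTopologicalBasis B ∧ #B = wt X :=
  csInf_mem (s := {c | ∃ B : Set (Set X), TopologicalSpace.IsTopologicalBasis B ∧ #B = c})
    ⟨_, _, TopologicalSpace.isTopologicalBasis_opens, rfl⟩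

theorem statement_14_general (G : Type u) [TopologicalSpace G] [Group G] [CompactSpace G]
    (hcl : ℵ₀ ≤ cL G) :
    cL G ≤ wt G := by
  obtain ⟨B, hB, hBwt⟩ := exists_isTopologicalBasis_mk_eq_wt G
  have hcount := cL_le_mk_finset hB
  have : Infinite B := by
    rw [← not_finite_iff_infinite]
    intro hfin
    exact (hcl.trans hcount).not_gt mk_lt_aleph0
  rwa [← hBwt, ← mk_finset_of_infinite]

theorem statement_14 (G : Type u) [TopologicalSpace G] [Group G] [IsTopologicalGroup G] [T2Space G]
    [CompactSpace G] [ConnectedSpace G] (hcl : ℵ₀ ≤ cL G) :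
    cL G ≤ wt G :=
  statement_14_general G hcl
end
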